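/- arXiv:2604.24192 — 8 statements merged into one kernel-verified Lean document; each statement's English description precedes it below -/
import Mathlib

section
/- Let A be an n×n Hermitian positive semidefinite complex matrix and fix an index i. Then per(A) ≥ A_{ii} · per(A(i)), where A(i) is the principal submatrix obtained by deleting row i and column i. -/
open Matrix ComplexOrder

namespace PermAux

open Finset Equiv

variable {n : ℕ}

lemma quad_nonneg {ι κ : Type*} [Fintype ι] [DecidableEq κ]
    (A B : Matrix (Fin (n+1)) (Fin (n+1)) ℂ) (hB : A = Bᴴ * B)
    (E : Finset κ) (c : κ → ℂ) (v : κ → ι → Fin (n+1)) :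
    0 ≤ ∑ σ ∈ E, ∑ τ ∈ E, (starRingEnd ℂ) (c σ) * c τ *
      ∏ s : ι, A (v σ s) (v τ s) := by
  classical
  set G : κ → (ι → Fin (n+1)) → ℂ := fun σ u => ∏ s, B (u s) (v σ s) with hG
  have hAent : ∀ (j k : Fin (n+1)), A j k = ∑ x, (starRingEnd ℂ) (B x j) * B x k := by
    intro j k
    rw [hB]
    simp only [Matrix.mul_apply, Matrix.conjTranspose_apply, starRingEnd_apply]
  have e1 : ∑ σ ∈ E, ∑ τ ∈ E, (starRingEnd ℂ) (c σ) * c τ * ∏ s : ι, A (v σ s) (v τ s)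
      = ∑ u : ι → Fin (n+1),
          (starRingEnd ℂ) (∑ σ ∈ E, c σ * G σ u) * (∑ τ ∈ E, c τ * G τ u) := by
    calc ∑ σ ∈ E, ∑ τ ∈ E, (starRingEnd ℂ) (c σ) * c τ * ∏ s : ι, A (v σ s) (v τ s)
        = ∑ σ ∈ E, ∑ τ ∈ E, ∑ u : ι → Fin (n+1),
            (starRingEnd ℂ) (c σ * G σ u) * (c τ * G τ u) := by
          refine Finset.sum_congr rfl fun σ _ => Finset.sum_congr rfl fun τ _ => ?_
          have hprod : (∏ s : ι, A (v σ s) (v τ s))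
              = ∑ u : ι → Fin (n+1), (starRingEnd ℂ) (G σ u) * G τ u := by
            simp only [hAent]
            rw [Fintype.prod_sum]
            refine Finset.sum_congr rfl fun u _ => ?_
            rw [Finset.prod_mul_distrib, hG]
            simp [map_prod]
          rw [hprod, Finset.mul_sum]
          refine Finset.sum_congr rfl fun u _ => ?_
          simp only [_root_.map_mul]
          ring
      _ = ∑ σ ∈ E, ∑ u : ι → Fin (n+1), ∑ τ ∈ E,
            (starRingEnd ℂ) (c σ * G σ u) * (c τ * G τ u) :=
          Finset.sum_congr rfl fun σ _ => Finset.sum_comm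
      _ = ∑ u : ι → Fin (n+1), ∑ σ ∈ E, ∑ τ ∈ E,
            (starRingEnd ℂ) (c σ * G σ u) * (c τ * G τ u) := Finset.sum_comm
      _ = _ := by
          refine Finset.sum_congr rfl fun u _ => ?_
          rw [map_sum, Finset.sum_mul_sum]
  rw [e1]
  exact Finset.sum_nonneg fun u _ => star_mul_self_nonneg _

lemma sum_fiber (f : Equiv.Perm (Fin (n+1)) → ℂ) :
    ∑ p : Fin (n+1), ∑ σ ∈ Finset.univ.filter (fun σ : Equiv.Perm (Fin (n+1)) => σ p = 0), f σ
      = ∑ σ : Equiv.Perm (Fin (n+1)), f σ := by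
  simp only [Finset.sum_filter]
  rw [Finset.sum_comm]
  refine Finset.sum_congr rfl fun σ _ => ?_
  have h : ∀ p : Fin (n+1), (σ p = 0) ↔ (p = σ.symm 0) := fun p =>
    Equiv.apply_eq_iff_eq_symm_apply σ
  calc ∑ p, ite (σ p = 0) (f σ) 0 = ∑ p, ite (p = σ.symm 0) (f σ) 0 := by
        refine Finset.sum_congr rfl fun p _ => ?_
        simp only [h]
    _ = f σ := by rw [Finset.sum_ite_eq' Finset.univ (σ.symm 0) (fun _ => f σ)]; simp

lemma total (A : Matrix (Fin (n+1)) (Fin (n+1)) ℂ) :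
    ∑ σ : Equiv.Perm (Fin (n+1)), ∑ τ : Equiv.Perm (Fin (n+1)), ∏ s, A (σ s) (τ s)
      = (Nat.factorial (n+1) : ℂ) * A.permanent := by
  have h1 : ∀ σ : Equiv.Perm (Fin (n+1)),
      ∑ τ : Equiv.Perm (Fin (n+1)), ∏ s, A (σ s) (τ s) = A.permanent := by
    intro σ
    rw [← Matrix.permanent_transpose]
    calc ∑ τ : Equiv.Perm (Fin (n+1)), ∏ s, A (σ s) (τ s)
        = ∑ π : Equiv.Perm (Fin (n+1)), ∏ s, A (σ s) ((π * σ) s) :=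
          (Fintype.sum_equiv (Equiv.mulRight σ)
            (fun π => ∏ s, A (σ s) ((π * σ) s))
            (fun τ => ∏ s, A (σ s) (τ s)) (fun π => rfl)).symm
      _ = ∑ π : Equiv.Perm (Fin (n+1)), ∏ j, A j (π j) := by
          refine Finset.sum_congr rfl fun π _ => ?_
          exact Equiv.prod_comp σ (fun j => A j (π j))
      _ = Aᵀ.permanent := by
          simp [Matrix.permanent, Matrix.transpose_apply]
  simp only [h1, Finset.sum_const, Finset.card_univ, Fintype.card_perm, Fintype.card_fin,
    nsmul_eq_mul]

lemma hfst (π : Equiv.Perm (Fin (n+1))) : (Equiv.Perm.decomposeFin π).1 = π 0 := by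
  have h := Equiv.Perm.decomposeFin_symm_apply_zero
    (Equiv.Perm.decomposeFin π).1 (Equiv.Perm.decomposeFin π).2
  rw [Prod.mk.eta, Equiv.symm_apply_apply] at h
  exact h.symm

lemma hsucc (π : Equiv.Perm (Fin (n+1))) (hπ : π 0 = 0) (j : Fin n) :
    π j.succ = ((Equiv.Perm.decomposeFin π).2 j).succ := by
  have h := Equiv.Perm.decomposeFin_symm_apply_succ
    (Equiv.Perm.decomposeFin π).2 (Equiv.Perm.decomposeFin π).1 j
  rw [Prod.mk.eta, Equiv.symm_apply_apply] at h
  rw [h, hfst π, hπ]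
  simp

lemma Qlem (A : Matrix (Fin (n+1)) (Fin (n+1)) ℂ) :
    ∑ π ∈ Finset.univ.filter (fun π : Equiv.Perm (Fin (n+1)) => π 0 = 0), ∏ j, A j (π j)
      = A 0 0 * (A.submatrix Fin.succ Fin.succ).permanent := by
  rw [← Matrix.permanent_transpose]
  have h2 : (A.submatrix Fin.succ Fin.succ)ᵀ.permanent
      = ∑ ρ : Equiv.Perm (Fin n), ∏ j : Fin n, A j.succ ((ρ j).succ) := by
    simp [Matrix.permanent, Matrix.transpose_apply, Matrix.submatrix_apply]
  rw [h2, Finset.mul_sum]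
  refine Finset.sum_nbij' (i := fun π => (Equiv.Perm.decomposeFin π).2)
    (j := fun ρ => Equiv.Perm.decomposeFin.symm (0, ρ)) ?_ ?_ ?_ ?_ ?_
  · intro π _; exact Finset.mem_univ _
  · intro ρ _
    simp [Finset.mem_filter]
  · intro π hπ
    simp only [Finset.mem_filter, Finset.mem_univ, true_and] at hπ
    rw [show (0 : Fin (n+1)) = (Equiv.Perm.decomposeFin π).1 from by rw [hfst, hπ],
      Prod.mk.eta, Equiv.symm_apply_apply]
  · intro ρ _
    rw [Equiv.apply_symm_apply]
  · intro π hπ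
    simp only [Finset.mem_filter, Finset.mem_univ, true_and] at hπ
    rw [Fin.prod_univ_succ]
    congr 1
    · rw [hπ]
    · exact Finset.prod_congr rfl fun j _ => by rw [hsucc π hπ j]

lemma diag (A : Matrix (Fin (n+1)) (Fin (n+1)) ℂ) (p : Fin (n+1)) :
    ∑ σ ∈ Finset.univ.filter (fun σ : Equiv.Perm (Fin (n+1)) => σ p = 0),
      ∑ τ ∈ Finset.univ.filter (fun τ : Equiv.Perm (Fin (n+1)) => τ p = 0),
        ∏ s, A (σ s) (τ s)
    = ((Finset.univ.filter (fun σ : Equiv.Perm (Fin (n+1)) => σ p = 0)).card : ℂ) *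
        (A 0 0 * (A.submatrix Fin.succ Fin.succ).permanent) := by
  have hinner : ∀ σ ∈ Finset.univ.filter (fun σ : Equiv.Perm (Fin (n+1)) => σ p = 0),
      ∑ τ ∈ Finset.univ.filter (fun τ : Equiv.Perm (Fin (n+1)) => τ p = 0),
        ∏ s, A (σ s) (τ s)
      = A 0 0 * (A.submatrix Fin.succ Fin.succ).permanent := by
    intro σ hσ
    simp only [Finset.mem_filter, Finset.mem_univ, true_and] at hσ
    rw [← Qlem A]
    have hp : σ⁻¹ 0 = p := by
      rw [← hσ, Equiv.Perm.coe_inv, Equiv.symm_apply_apply]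
    refine Finset.sum_equiv (Equiv.mulRight σ⁻¹) (fun τ => ?_) (fun τ _ => ?_)
    · simp only [Finset.mem_filter, Finset.mem_univ, true_and, Equiv.coe_mulRight,
        Equiv.Perm.mul_apply, hp]
    · simp only [Equiv.coe_mulRight, Equiv.Perm.mul_apply]
      have h := Equiv.prod_comp σ (fun j => A j (τ (σ⁻¹ j)))
      simp only [Equiv.Perm.coe_inv, Equiv.symm_apply_apply] at h
      exact h
  rw [Finset.sum_congr rfl hinner, Finset.sum_const, nsmul_eq_mul]

lemma offdiag (A B : Matrix (Fin (n+1)) (Fin (n+1)) ℂ) (hB : A = Bᴴ * B)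
    {p q : Fin (n+1)} (hpq : p ≠ q) :
    0 ≤ ∑ σ ∈ Finset.univ.filter (fun σ : Equiv.Perm (Fin (n+1)) => σ p = 0),
      ∑ τ ∈ Finset.univ.filter (fun τ : Equiv.Perm (Fin (n+1)) => τ q = 0),
        ∏ s, A (σ s) (τ s) := by
  classical
  have hHerm : A.IsHermitian := by
    rw [hB]; exact Matrix.isHermitian_conjTranspose_mul_self B
  set Ep := Finset.univ.filter (fun σ : Equiv.Perm (Fin (n+1)) => σ p = 0) with hEp
  set D := (Finset.univ.erase p).erase q with hD
  set c : Equiv.Perm (Fin (n+1)) → ℂ := fun σ => A 0 (σ q) with hc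
  have step1 : ∀ σ ∈ Ep,
      ∑ τ ∈ Finset.univ.filter (fun τ : Equiv.Perm (Fin (n+1)) => τ q = 0),
        ∏ s, A (σ s) (τ s)
      = ∑ τ ∈ Ep, ∏ s, A (σ s) ((τ * Equiv.swap p q) s) := by
    intro σ _
    refine (Finset.sum_equiv (Equiv.mulRight (Equiv.swap p q)) (fun τ => ?_)
      (fun τ _ => rfl)).symm
    simp only [hEp, Finset.mem_filter, Finset.mem_univ, true_and, Equiv.coe_mulRight,
      Equiv.Perm.mul_apply, Equiv.swap_apply_right]
  have step2 : ∀ σ ∈ Ep, ∀ τ ∈ Ep,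
      ∏ s, A (σ s) ((τ * Equiv.swap p q) s)
      = (starRingEnd ℂ) (c σ) * c τ * ∏ s : {x // x ∈ D}, A (σ ↑s) (τ ↑s) := by
    intro σ hσ τ hτ
    simp only [hEp, Finset.mem_filter, Finset.mem_univ, true_and] at hσ hτ
    calc ∏ s, A (σ s) ((τ * Equiv.swap p q) s)
        = ∏ s, (fun s => A (σ (Equiv.swap p q s)) (τ s)) (Equiv.swap p q s) := by
          refine Finset.prod_congr rfl fun s _ => ?_
          simp only [Equiv.Perm.mul_apply, Equiv.swap_apply_self]
      _ = ∏ s, A (σ (Equiv.swap p q s)) (τ s) :=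
          Equiv.prod_comp (Equiv.swap p q) (fun s => A (σ (Equiv.swap p q s)) (τ s))
      _ = A (σ (Equiv.swap p q p)) (τ p) *
            (A (σ (Equiv.swap p q q)) (τ q) *
              ∏ s ∈ D, A (σ (Equiv.swap p q s)) (τ s)) := by
          rw [← Finset.mul_prod_erase Finset.univ _ (Finset.mem_univ p),
            ← Finset.mul_prod_erase (Finset.univ.erase p) _
              (Finset.mem_erase.mpr ⟨Ne.symm hpq, Finset.mem_univ q⟩)]
      _ = (starRingEnd ℂ) (c σ) * c τ * ∏ s : {x // x ∈ D}, A (σ ↑s) (τ ↑s) := by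
          have hDs : ∏ s ∈ D, A (σ (Equiv.swap p q s)) (τ s) = ∏ s ∈ D, A (σ s) (τ s) :=
            Finset.prod_congr rfl fun s hs => by
              simp only [hD, Finset.mem_erase] at hs
              rw [Equiv.swap_apply_of_ne_of_ne hs.2.1 hs.1]
          rw [Equiv.swap_apply_left, Equiv.swap_apply_right, hσ, hτ, hDs,
            ← Finset.prod_coe_sort D (fun s => A (σ s) (τ s)), hc]
          rw [show A (σ q) (0 : Fin (n+1)) = (starRingEnd ℂ) (A 0 (σ q)) from by
            rw [starRingEnd_apply]; exact (hHerm.apply (σ q) 0).symm]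
          ring
  have hsum : ∑ σ ∈ Ep, ∑ τ ∈ Finset.univ.filter
        (fun τ : Equiv.Perm (Fin (n+1)) => τ q = 0), ∏ s, A (σ s) (τ s)
      = ∑ σ ∈ Ep, ∑ τ ∈ Ep, (starRingEnd ℂ) (c σ) * c τ *
          ∏ s : {x // x ∈ D}, A (σ ↑s) (τ ↑s) := by
    refine Finset.sum_congr rfl fun σ hσ => ?_
    rw [step1 σ hσ]
    exact Finset.sum_congr rfl fun τ hτ => step2 σ hσ τ hτ
  rw [hsum]
  exact quad_nonneg A B hB Ep c (fun σ (s : {x // x ∈ D}) => σ ↑s)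

lemma cancel_pos_nat {m : ℕ} (hm : 0 < m) {x y : ℂ} (h : (m:ℂ) * x ≤ (m:ℂ) * y) : x ≤ y := by
  rw [← sub_nonneg] at h ⊢
  rw [← mul_sub] at h
  have hinv : (0:ℂ) ≤ ((m:ℂ))⁻¹ := by
    rw [show ((m:ℂ))⁻¹ = (((m:ℝ)⁻¹ : ℝ) : ℂ) from by
      rw [Complex.ofReal_inv, Complex.ofReal_natCast]]
    rw [Complex.zero_le_real]
    positivity
  have h2 : (0:ℂ) ≤ ((m:ℂ))⁻¹ * ((m:ℂ) * (y - x)) := mul_nonneg hinv h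
  rwa [inv_mul_cancel_left₀ (by exact_mod_cast hm.ne' : (m:ℂ) ≠ 0)] at h2

lemma main0 (A : Matrix (Fin (n+1)) (Fin (n+1)) ℂ) (hA : A.PosSemidef) :
    A 0 0 * (A.submatrix Fin.succ Fin.succ).permanent ≤ A.permanent := by
  classical
  obtain ⟨B, hB⟩ : ∃ B : Matrix (Fin (n+1)) (Fin (n+1)) ℂ, A = Bᴴ * B := by
    open scoped MatrixOrder Matrix.Norms.L2Operator in
    exact CStarAlgebra.nonneg_iff_eq_star_mul_self.mp hA.nonneg
  set E : Fin (n+1) → Finset (Equiv.Perm (Fin (n+1))) :=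
    fun p => Finset.univ.filter (fun σ => σ p = 0) with hE
  set F : Fin (n+1) → Fin (n+1) → ℂ :=
    fun p q => ∑ σ ∈ E p, ∑ τ ∈ E q, ∏ s, A (σ s) (τ s) with hF
  have htotal : ∑ p, ∑ q, F p q = (Nat.factorial (n+1) : ℂ) * A.permanent := by
    calc ∑ p, ∑ q, F p q
        = ∑ p, ∑ σ ∈ E p, ∑ q, ∑ τ ∈ E q, ∏ s, A (σ s) (τ s) :=
          Finset.sum_congr rfl fun p _ => Finset.sum_comm
      _ = ∑ σ : Equiv.Perm (Fin (n+1)), ∑ q, ∑ τ ∈ E q, ∏ s, A (σ s) (τ s) :=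
          sum_fiber _
      _ = ∑ σ : Equiv.Perm (Fin (n+1)), ∑ τ : Equiv.Perm (Fin (n+1)), ∏ s, A (σ s) (τ s) :=
          Finset.sum_congr rfl fun σ _ => sum_fiber _
      _ = _ := total A
  have hdiag : ∑ p, F p p
      = (Nat.factorial (n+1) : ℂ) * (A 0 0 * (A.submatrix Fin.succ Fin.succ).permanent) := by
    calc ∑ p, F p p
        = ∑ p, ((E p).card : ℂ) * (A 0 0 * (A.submatrix Fin.succ Fin.succ).permanent) :=
          Finset.sum_congr rfl fun p _ => diag A p
      _ = (∑ p, ((E p).card : ℂ)) * (A 0 0 * (A.submatrix Fin.succ Fin.succ).permanent) :=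
          (Finset.sum_mul _ _ _).symm
      _ = _ := by
          congr 1
          have h1 : ∑ p, ((E p).card : ℂ) = ∑ p, ∑ σ ∈ E p, (1 : ℂ) := by
            refine Finset.sum_congr rfl fun p _ => ?_
            rw [Finset.sum_const, nsmul_eq_mul, mul_one]
          rw [h1, sum_fiber (fun _ => (1:ℂ))]
          simp [Finset.card_univ, Fintype.card_perm]
  have hoff : ∀ p q : Fin (n+1), p ≠ q → 0 ≤ F p q := fun p q hpq => offdiag A B hB hpq
  have hmul : (Nat.factorial (n+1) : ℂ) *
      (A 0 0 * (A.submatrix Fin.succ Fin.succ).permanent)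
      ≤ (Nat.factorial (n+1) : ℂ) * A.permanent := by
    rw [← hdiag, ← htotal]
    refine Finset.sum_le_sum fun p _ => ?_
    rw [← Finset.add_sum_erase Finset.univ (F p) (Finset.mem_univ p)]
    exact le_add_of_nonneg_right (Finset.sum_nonneg fun q hq =>
      hoff p q (Ne.symm (Finset.ne_of_mem_erase hq)))
  exact cancel_pos_nat (Nat.factorial_pos (n+1)) hmul

end PermAux

open PermAux in
/-- For a Hermitian positive semidefinite matrix `A` and an index `i`,
`per(A) ≥ A i i * per(A(i))`, where `A(i)` deletes row and column `i`.
(The inequality is in the order on `ℂ` given by `ComplexOrder`.) -/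
theorem permanent_ge_diag_mul_permanent_submatrix {n : ℕ}
    (A : Matrix (Fin (n + 1)) (Fin (n + 1)) ℂ) (hA : A.PosSemidef) (i : Fin (n + 1)) :
    A i i * (A.submatrix i.succAbove i.succAbove).permanent ≤ A.permanent := by
  classical
  set e : Fin (n+1) ≃ Fin (n+1) := (finSuccEquiv' 0).trans (finSuccEquiv' i).symm with he
  have he0 : e 0 = i := by simp [he]
  have hesucc : ∀ j : Fin n, e j.succ = i.succAbove j := by
    intro j
    have h1 : (finSuccEquiv' (0 : Fin (n+1))) j.succ = some j := by
      have := finSuccEquiv'_succAbove (0 : Fin (n+1)) j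
      rwa [Fin.succAbove_zero] at this
    simp [he, h1, finSuccEquiv'_symm_some]
  set A' := A.submatrix e e with hA'
  have hPSD : A'.PosSemidef := hA.submatrix e
  have h1 := main0 A' hPSD
  have hper : A'.permanent = A.permanent := by
    have hsplit : A' = (A.submatrix id ⇑e).submatrix ⇑e id := by
      rw [hA', Matrix.submatrix_submatrix]
      rfl
    rw [hsplit, Matrix.permanent_permute_cols e (A.submatrix id ⇑e),
      Matrix.permanent_permute_rows e A]
  have h2 : A' 0 0 = A i i := by rw [hA', Matrix.submatrix_apply, he0]
  have h3 : A'.submatrix Fin.succ Fin.succ = A.submatrix i.succAbove i.succAbove := by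
    rw [hA', Matrix.submatrix_submatrix]
    congr 1 <;> funext j <;> simp [Function.comp, hesucc j]
  rw [h2, h3, hper] at h1
  exact h1
end

section
/- Let A be a real symmetric n×n Z-matrix (i.e., A_{ij} ≤ 0 for i ≠ j) with nonnegative diagonal entries, and suppose the support graph of A (the simple graph on {1,...,n} with edge {i,j} iff i ≠ j and A_{ij} ≠ 0) is bipartite. Then per(A ∘ A) ≤ per(A)², where ∘ denotes the entrywise (Hadamard) product. -/
open Matrix

/-- The support graph of a real symmetric matrix: distinct `i, j` are adjacent
iff the corresponding entry is nonzero. -/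
def supportGraph {n : ℕ} (A : Matrix (Fin n) (Fin n) ℝ) : SimpleGraph (Fin n) where
  Adj i j := i ≠ j ∧ (A i j ≠ 0 ∨ A j i ≠ 0)
  symm := by
    constructor
    intro i j h
    exact ⟨h.1.symm, h.2.symm⟩
  loopless := by
    constructor
    intro i h
    exact h.1 rfl

/-- For a symmetric Z-matrix with nonnegative diagonal whose support graph is bipartite,
`per(A ∘ A) ≤ per(A)²`. -/
theorem permanent_hadamard_le_sq_of_bipartite_support {n : ℕ}
    (A : Matrix (Fin n) (Fin n) ℝ) (hsymm : A.IsSymm)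
    (hZ : ∀ i j : Fin n, i ≠ j → A i j ≤ 0) (hdiag : ∀ i : Fin n, 0 ≤ A i i)
    (hbip : (supportGraph A).Colorable 2) :
    (Matrix.hadamard A A).permanent ≤ A.permanent ^ 2 := by
  obtain ⟨c⟩ := hbip
  set ε : Fin n → ℝ := fun i => if c i = 0 then 1 else -1 with hε
  have hεsq : ∀ i, ε i * ε i = 1 := by
    intro i; by_cases h : c i = 0 <;> simp [hε, h]
  -- the sign-flipped matrix
  set B : Matrix (Fin n) (Fin n) ℝ := fun i j => ε i * ε j * A i j with hB
  have hBnn : ∀ i j, 0 ≤ B i j := by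
    intro i j
    by_cases hij : i = j
    · subst hij
      simpa [hB, hεsq i] using hdiag i
    · by_cases hA : A i j = 0
      · simp [hB, hA]
      · have hadj : (supportGraph A).Adj i j := ⟨hij, Or.inl hA⟩
        have hc : c i ≠ c j := c.valid hadj
        have hεε : ε i * ε j = -1 := by
          by_cases h : c i = 0
          · have h' : c j ≠ 0 := fun hh => hc (h.trans hh.symm)
            simp [hε, h, h']
          · have h' : c j = 0 := by omega
            simp [hε, h, h']
        rw [hB]
        simp only [hεε]
        nlinarith [hZ i j hij]
  have hsq : ∀ i j, B i j * B i j = A i j * A i j := by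
    intro i j
    have : (ε i * ε j) * (ε i * ε j) = 1 := by
      have := hεsq i; have := hεsq j; ring_nf; nlinarith
    show (ε i * ε j * A i j) * (ε i * ε j * A i j) = A i j * A i j
    nlinarith [this]
  -- permanents agree
  have hper : B.permanent = A.permanent := by
    unfold Matrix.permanent
    refine Finset.sum_congr rfl ?_
    intro σ _
    have : ∏ i, B (σ i) i = (∏ i, ε (σ i)) * (∏ i, ε i) * ∏ i, A (σ i) i := by
      rw [hB]
      simp only [Finset.prod_mul_distrib]
    rw [this, Equiv.prod_comp σ ε]
    have h1 : (∏ i, ε i) * (∏ i, ε i) = 1 := by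
      rw [← Finset.prod_mul_distrib]
      simp only [hεsq]
      simp
    rw [h1, one_mul]
  -- main estimate
  have key : (Matrix.hadamard A A).permanent = ∑ σ : Equiv.Perm (Fin n),
      (∏ i, B (σ i) i) ^ 2 := by
    unfold Matrix.permanent
    refine Finset.sum_congr rfl ?_
    intro σ _
    rw [← Finset.prod_pow]
    refine Finset.prod_congr rfl ?_
    intro i _
    simp only [Matrix.hadamard_apply, sq]
    exact (hsq (σ i) i).symm
  rw [key, ← hper]
  unfold Matrix.permanent
  exact Finset.sum_sq_le_sq_sum_of_nonneg fun σ _ =>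
    Finset.prod_nonneg fun i _ => hBnn (σ i) i
end

section
/- Let A be a real symmetric n×n Z-matrix with nonnegative diagonal whose support graph is bipartite. Then for every permutation σ ∈ S_n, the product Π_{i=1}^n A_{i,σ(i)} is nonnegative. -/
open Matrix

/-- For a symmetric Z-matrix with nonnegative diagonal whose support graph is bipartite,
every permutation contributes a nonnegative term to the permanent. -/
theorem prod_nonneg_of_bipartite_support {n : ℕ}
    (A : Matrix (Fin n) (Fin n) ℝ) (hsymm : A.IsSymm)
    (hZ : ∀ i j : Fin n, i ≠ j → A i j ≤ 0) (hdiag : ∀ i : Fin n, 0 ≤ A i i)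
    (hbip : (supportGraph A).Colorable 2) (σ : Equiv.Perm (Fin n)) :
    0 ≤ ∏ i : Fin n, A i (σ i) := by
  classical
  by_cases h0 : ∃ i, A i (σ i) = 0
  · obtain ⟨i, hi⟩ := h0
    rw [Finset.prod_eq_zero (Finset.mem_univ i) hi]
  push_neg at h0
  obtain ⟨c⟩ := hbip
  set f : Fin n → ℤ := fun i => if c i = 0 then 1 else -1 with hf
  set S : Finset (Fin n) := Finset.univ.filter (fun i => σ i ≠ i) with hS
  have hmem : ∀ i, i ∈ S ↔ σ i ≠ i := by
    intro i; simp [hS]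
  have hflip : ∀ i ∈ S, f (σ i) = -f i := by
    intro i hi
    rw [hmem] at hi
    have hadj : (supportGraph A).Adj i (σ i) := ⟨fun h => hi h.symm, Or.inl (h0 i)⟩
    have hne : c i ≠ c (σ i) := c.valid hadj
    simp only [hf]
    have key : ∀ a b : Fin 2, a ≠ b →
        (if b = 0 then (1:ℤ) else -1) = -(if a = 0 then 1 else -1) := by decide
    exact key _ _ hne
  have hprod : ∏ i ∈ S, f (σ i) = ∏ i ∈ S, f i := by
    apply Finset.prod_bij' (fun i _ => σ i) (fun i _ => σ.symm i)
    · intro i hi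
      rw [hmem] at hi ⊢
      simpa using fun h => hi (σ.injective h)
    · intro i hi
      rw [hmem] at hi ⊢
      simp only [Equiv.apply_symm_apply]
      intro h
      exact hi (by rw [h, Equiv.apply_symm_apply]; exact h)
    · intro i _; simp
    · intro i _; simp
    · intro i _; rfl
  have hne : ∏ i ∈ S, f i ≠ 0 := by
    apply Finset.prod_ne_zero_iff.mpr
    intro i _
    simp only [hf]
    split <;> simp
  have heq : ∏ i ∈ S, f (σ i) = (-1) ^ S.card * ∏ i ∈ S, f i := by
    calc ∏ i ∈ S, f (σ i) = ∏ i ∈ S, (-1) * f i :=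
          Finset.prod_congr rfl (fun i hi => by rw [hflip i hi]; ring)
      _ = (-1) ^ S.card * ∏ i ∈ S, f i := by
          rw [Finset.prod_mul_distrib, Finset.prod_const]
  have h1 : ((-1:ℤ)) ^ S.card * ∏ i ∈ S, f i = 1 * ∏ i ∈ S, f i := by
    rw [one_mul]; exact heq.symm.trans hprod
  have hpow : ((-1 : ℤ)) ^ S.card = 1 := mul_right_cancel₀ hne h1
  have hcard : Even S.card :=
    (neg_one_pow_eq_one_iff_even (by norm_num : (-1:ℤ) ≠ 1)).mp hpow
  have hfilter : Finset.univ.filter (fun i => A i (σ i) ≤ 0) = S := by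
    ext i
    simp only [Finset.mem_filter, Finset.mem_univ, true_and, hmem]
    constructor
    · intro h hfix
      rw [hfix] at h
      exact h0 i (by rw [hfix]; exact le_antisymm h (hdiag i))
    · intro h
      exact hZ i (σ i) (Ne.symm h)
  apply Finset.prod_nonneg_of_card_nonpos_even
  rwa [hfilter]
end

section
/- Let G be a bipartite simple graph with Laplacian matrix L_G = D_G − A_G. Then per(L_G ∘ L_G) ≤ per(L_G)², where ∘ denotes the entrywise product. -/
open Matrix

/-- The Laplacian matrix of a simple graph, with real entries. -/
noncomputable def lap {V : Type*} [Fintype V] [DecidableEq V] (G : SimpleGraph V) :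
    Matrix V V ℝ :=
  letI := Classical.decRel G.Adj
  G.lapMatrix ℝ

lemma lap_adj {V : Type*} [Fintype V] [DecidableEq V] (G : SimpleGraph V)
    {i j : V} (h : i ≠ j) (hadj : G.Adj i j) : lap G i j = -1 := by
  classical
  unfold lap
  simp [SimpleGraph.lapMatrix, SimpleGraph.degMatrix, Matrix.sub_apply,
    Matrix.diagonal_apply_ne _ h, SimpleGraph.adjMatrix_apply, hadj]

lemma lap_not_adj {V : Type*} [Fintype V] [DecidableEq V] (G : SimpleGraph V)
    {i j : V} (h : i ≠ j) (hadj : ¬ G.Adj i j) : lap G i j = 0 := by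
  classical
  unfold lap
  simp [SimpleGraph.lapMatrix, SimpleGraph.degMatrix, Matrix.sub_apply,
    Matrix.diagonal_apply_ne _ h, SimpleGraph.adjMatrix_apply, hadj]

lemma lap_diag_nonneg {V : Type*} [Fintype V] [DecidableEq V] (G : SimpleGraph V)
    (i : V) : 0 ≤ lap G i i := by
  classical
  unfold lap
  simp [SimpleGraph.lapMatrix, SimpleGraph.degMatrix, Matrix.sub_apply]

lemma term_nonneg {V : Type*} [Fintype V] [DecidableEq V] (G : SimpleGraph V)
    (hbip : G.Colorable 2) (σ : Equiv.Perm V) :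
    0 ≤ ∏ i, lap G (σ i) i := by
  classical
  by_cases h : ∀ i, σ i ≠ i → G.Adj (σ i) i
  · -- support is even
    obtain ⟨C⟩ := hbip
    set S : Finset V := σ.support with hS
    have hS0 : (S.filter fun i => C i = 0).card = (S.filter fun i => ¬ C i = 0).card := by
      apply Finset.card_bij' (fun i _ => σ i) (fun j _ => σ⁻¹ j)
      · intro i hi
        simp only [Finset.mem_filter] at hi ⊢
        have hiS : i ∈ S := hi.1
        have h1 : σ i ∈ S := by
          rw [hS, Equiv.Perm.apply_mem_support]; exact hiS
        refine ⟨h1, ?_⟩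
        have hadj := h i (Equiv.Perm.mem_support.mp hiS)
        have := C.valid hadj
        rw [hi.2] at this
        exact fun hc => this (by rw [hc])
      · intro j hj
        simp only [Finset.mem_filter] at hj ⊢
        have hjS : j ∈ S := hj.1
        have h1 : σ⁻¹ j ∈ S := by
          rw [hS, ← Equiv.Perm.apply_mem_support, show σ (σ⁻¹ j) = j from σ.apply_symm_apply j]; exact hjS
        refine ⟨h1, ?_⟩
        have hadj := h (σ⁻¹ j) (Equiv.Perm.mem_support.mp h1)
        rw [show σ (σ⁻¹ j) = j from σ.apply_symm_apply j] at hadj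
        have hne := C.valid hadj
        have : C (σ⁻¹ j) ≠ C j := fun e => hne e.symm
        have hj2 := hj.2
        have key : ∀ a b : Fin 2, a ≠ b → b ≠ 0 → a = 0 := by decide
        exact key _ _ this (fun e => hj2 e)
      · intro i hi; simp
      · intro j hj; simp
    have heven : Even S.card := by
      have := Finset.card_filter_add_card_filter_not (s := S)
        (p := fun i => C i = 0)
      rw [← this, hS0]
      exact ⟨_, rfl⟩
    have hsplit : (∏ i, lap G (σ i) i) =
        (∏ i ∈ S, lap G (σ i) i) * ∏ i ∈ Sᶜ, lap G (σ i) i := by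
      rw [Finset.prod_mul_prod_compl]
    rw [hsplit]
    have h1 : (∏ i ∈ S, lap G (σ i) i) = (-1 : ℝ) ^ S.card := by
      rw [Finset.prod_congr rfl (fun i hi => ?_), Finset.prod_const]
      have hi' := Equiv.Perm.mem_support.mp hi
      exact lap_adj G hi' (h i hi')
    rw [h1, heven.neg_one_pow, one_mul]
    apply Finset.prod_nonneg
    intro i hi
    have : σ i = i := by
      by_contra hc
      exact (Finset.mem_compl.mp hi) (Equiv.Perm.mem_support.mpr hc)
    rw [this]
    exact lap_diag_nonneg G i
  · push_neg at h
    obtain ⟨i, hne, hadj⟩ := h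
    have : lap G (σ i) i = 0 := by
      exact lap_not_adj G hne hadj
    exact le_of_eq (Finset.prod_eq_zero (f := fun j => lap G (σ j) j) (Finset.mem_univ i) this).symm

/-- For a bipartite graph `G`, `per(L_G ∘ L_G) ≤ per(L_G)²`. -/
theorem permanent_hadamard_lap_le_sq_of_bipartite {V : Type*} [Fintype V] [DecidableEq V]
    (G : SimpleGraph V) (hbip : G.Colorable 2) :
    (Matrix.hadamard (lap G) (lap G)).permanent ≤ (lap G).permanent ^ 2 := by
  classical
  unfold Matrix.permanent
  have h1 : ∀ σ : Equiv.Perm V,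
      (∏ i, (Matrix.hadamard (lap G) (lap G)) (σ i) i) = (∏ i, lap G (σ i) i) ^ 2 := by
    intro σ
    simp only [Matrix.hadamard_apply, sq, ← Finset.prod_mul_distrib]
  calc (∑ σ : Equiv.Perm V, ∏ i, (Matrix.hadamard (lap G) (lap G)) (σ i) i)
      = ∑ σ : Equiv.Perm V, (∏ i, lap G (σ i) i) ^ 2 := by
        exact Finset.sum_congr rfl fun σ _ => h1 σ
    _ ≤ (∑ σ : Equiv.Perm V, ∏ i, lap G (σ i) i) ^ 2 :=
        Finset.sum_sq_le_sq_sum_of_nonneg fun σ _ => term_nonneg G hbip σ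
end

section
/- Let G = G₁ · G₂ be the vertex coalescence of (G₁, v₁) and (G₂, v₂) with merged vertex v. Then per(L_G) = per(L_{G₁}) · per(L_{G₂}(v₂)) + per(L_{G₁}(v₁)) · per(L_{G₂}). -/
open Matrix

/-- The principal submatrix of `A` obtained by deleting row and column `v`. -/
def del {V : Type*} (A : Matrix V V ℝ) (v : V) :
    Matrix {x : V // x ≠ v} {x : V // x ≠ v} ℝ :=
  A.submatrix Subtype.val Subtype.val

/-- The vertex coalescence `G₁ · G₂`, obtained by identifying `v₁ ∈ V(G₁)` with
`v₂ ∈ V(G₂)`. The merged vertex is `Sum.inl v₁`. -/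
def coalesce {V₁ V₂ : Type*} (G₁ : SimpleGraph V₁) (G₂ : SimpleGraph V₂)
    (v₁ : V₁) (v₂ : V₂) : SimpleGraph (V₁ ⊕ {x : V₂ // x ≠ v₂}) where
  Adj x y :=
    match x, y with
    | Sum.inl a, Sum.inl b => G₁.Adj a b
    | Sum.inl a, Sum.inr b => a = v₁ ∧ G₂.Adj v₂ b.1
    | Sum.inr a, Sum.inl b => b = v₁ ∧ G₂.Adj v₂ a.1
    | Sum.inr a, Sum.inr b => G₂.Adj a.1 b.1
  symm := by
    constructor
    rintro (a | a) (b | b) h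
    · exact G₁.adj_symm h
    · exact h
    · exact h
    · exact G₂.adj_symm h
  loopless := by
    constructor
    rintro (a | a) h
    · exact G₁.irrefl h
    · exact G₂.irrefl h

section PermLemmas
open Equiv Finset


variable {R : Type*} [CommSemiring R]

theorem permanent_updateColumn_eq {n : Type*} [DecidableEq n] [Fintype n]
    (M : Matrix n n R) (j : n) (w : n → R) :
    (M.updateCol j w).permanent =
      ∑ σ : Perm n, w (σ j) * ∏ i ∈ Finset.univ.erase j, M (σ i) i := by
  unfold Matrix.permanent
  refine Finset.sum_congr rfl fun σ _ => ?_
  rw [← Finset.mul_prod_erase _ _ (Finset.mem_univ j), Matrix.updateCol_self]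
  congr 1
  refine Finset.prod_congr rfl fun i hi => ?_
  rw [Matrix.updateCol_ne (Finset.ne_of_mem_erase hi)]

theorem permanent_updateColumn_add {n : Type*} [DecidableEq n] [Fintype n]
    (M : Matrix n n R) (j : n) (u v : n → R) :
    (M.updateCol j (u + v)).permanent =
      (M.updateCol j u).permanent + (M.updateCol j v).permanent := by
  simp [permanent_updateColumn_eq, add_mul, Finset.sum_add_distrib]

theorem permanent_updateRow_add {n : Type*} [DecidableEq n] [Fintype n]
    (M : Matrix n n R) (j : n) (u v : n → R) :
    (M.updateRow j (u + v)).permanent =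
      (M.updateRow j u).permanent + (M.updateRow j v).permanent := by
  rw [← permanent_transpose, ← updateCol_transpose, permanent_updateColumn_add,
    updateCol_transpose, permanent_transpose, updateCol_transpose, permanent_transpose]

theorem permanent_submatrix_equiv {m n : Type*} [DecidableEq m] [Fintype m]
    [DecidableEq n] [Fintype n] (A : Matrix n n R) (e : m ≃ n) :
    (A.submatrix e e).permanent = A.permanent := by
  unfold Matrix.permanent
  refine Fintype.sum_bijective e.permCongr e.permCongr.bijective _ _ fun σ => ?_
  exact Fintype.prod_equiv e _ _ fun i => by simp [Equiv.permCongr_apply]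

theorem permanent_eq_zero_of_rows {n : Type*} [DecidableEq n] [Fintype n]
    (A : Matrix n n R) (T C : Finset n) (hcard : C.card < T.card)
    (hz : ∀ t ∈ T, ∀ c, c ∉ C → A t c = 0) : A.permanent = 0 := by
  unfold Matrix.permanent
  refine Finset.sum_eq_zero fun σ _ => ?_
  by_cases h : ∃ i, σ i ∈ T ∧ i ∉ C
  · obtain ⟨i, hiT, hiC⟩ := h
    exact Finset.prod_eq_zero (Finset.mem_univ i) (hz _ hiT _ hiC)
  · push_neg at h
    exfalso
    have hsub : T ⊆ C.image σ := by
      intro t ht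
      have h2 := h (σ.symm t) (by simpa using ht)
      exact Finset.mem_image.mpr ⟨σ.symm t, h2, by simp⟩
    have : T.card ≤ C.card :=
      le_trans (Finset.card_le_card hsub) Finset.card_image_le
    omega


variable {R : Type*} [CommSemiring R]

theorem permanent_fromBlocks_zero₂₁ {m n : Type*} [DecidableEq m] [Fintype m]
    [DecidableEq n] [Fintype n]
    (A : Matrix m m R) (B : Matrix m n R) (D : Matrix n n R) :
    (Matrix.fromBlocks A B 0 D).permanent = A.permanent * D.permanent := by
  classical
  simp_rw [Matrix.permanent]
  convert Eq.symm <|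
    sum_subset (M := R)
      (subset_univ ((Equiv.Perm.sumCongrHom m n).range : Set (Perm (m ⊕ n))).toFinset) ?_
  · simp_rw [sum_mul_sum, ← sum_product', univ_product_univ]
    refine sum_nbij (fun σ ↦ σ.fst.sumCongr σ.snd) ?_ ?_ ?_ ?_
    · intro σ₁₂ _
      erw [Set.mem_toFinset, MonoidHom.mem_range]
      use σ₁₂
      simp only [Equiv.Perm.sumCongrHom_apply]
    · intro σ₁ _ σ₂ _
      dsimp only
      intro h
      have h2 : ∀ x, Equiv.Perm.sumCongr σ₁.fst σ₁.snd x = Equiv.Perm.sumCongr σ₂.fst σ₂.snd x :=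
        DFunLike.congr_fun h
      simp only [Sum.map_inr, Sum.map_inl, Equiv.Perm.sumCongr_apply, Sum.forall, Sum.inl.injEq,
        Sum.inr.injEq] at h2
      ext x
      · exact h2.left x
      · exact h2.right x
    · intro σ hσ
      erw [Set.mem_toFinset, MonoidHom.mem_range] at hσ
      obtain ⟨σ₁₂, hσ₁₂⟩ := hσ
      use σ₁₂
      rw [← hσ₁₂]
      simp
    · simp only [forall_prop_of_true, Prod.forall, mem_univ]
      intro σ₁ σ₂
      rw [Fintype.prod_sum_type]
      simp_rw [Equiv.sumCongr_apply, Sum.map_inr, Sum.map_inl, fromBlocks_apply₁₁,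
        fromBlocks_apply₂₂]
  · rintro σ - hσn
    have h1 : ¬∀ x, ∃ y, Sum.inl y = σ (Sum.inl x) := by
      rw [Set.mem_toFinset] at hσn
      simpa only [Set.MapsTo, Set.mem_range, forall_exists_index, forall_apply_eq_imp_iff] using
        mt Equiv.Perm.mem_sumCongrHom_range_of_perm_mapsTo_inl hσn
    obtain ⟨a, ha⟩ := not_forall.mp h1
    cases' hx : σ (Sum.inl a) with a2 b
    · have hn := (not_exists.mp ha) a2
      exact absurd hx.symm hn
    · rw [Finset.prod_eq_zero (Finset.mem_univ (Sum.inl a))]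
      rw [hx, fromBlocks_apply₂₁, Matrix.zero_apply]

theorem permanent_fromBlocks_zero₁₂ {m n : Type*} [DecidableEq m] [Fintype m]
    [DecidableEq n] [Fintype n]
    (A : Matrix m m R) (C : Matrix n m R) (D : Matrix n n R) :
    (Matrix.fromBlocks A 0 C D).permanent = A.permanent * D.permanent := by
  rw [← Matrix.permanent_transpose, fromBlocks_transpose, transpose_zero,
    permanent_fromBlocks_zero₂₁, Matrix.permanent_transpose, Matrix.permanent_transpose]

end PermLemmas


noncomputable def aij {V : Type*} (G : SimpleGraph V) (i j : V) : ℝ :=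
  letI := Classical.decRel G.Adj
  if G.Adj i j then 1 else 0

noncomputable def dg {V : Type*} [Fintype V] (G : SimpleGraph V) (i : V) : ℝ :=
  ∑ u : V, aij G i u

lemma aij_of_adj {V : Type*} {G : SimpleGraph V} {i j : V} (h : G.Adj i j) :
    aij G i j = 1 := by unfold aij; exact if_pos h

lemma aij_of_not_adj {V : Type*} {G : SimpleGraph V} {i j : V} (h : ¬ G.Adj i j) :
    aij G i j = 0 := by unfold aij; exact if_neg h

lemma aij_congr {V W : Type*} {G : SimpleGraph V} {G' : SimpleGraph W} {i j : V} {i' j' : W}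
    (h : G.Adj i j ↔ G'.Adj i' j') : aij G i j = aij G' i' j' := by
  by_cases hp : G.Adj i j
  · rw [aij_of_adj hp, aij_of_adj (h.mp hp)]
  · rw [aij_of_not_adj hp, aij_of_not_adj (fun hq => hp (h.mpr hq))]

lemma aij_self {V : Type*} (G : SimpleGraph V) (i : V) : aij G i i = 0 :=
  aij_of_not_adj (fun h => G.irrefl h)

lemma aij_comm {V : Type*} (G : SimpleGraph V) (i j : V) : aij G i j = aij G j i :=
  aij_congr (G.adj_comm i j)

lemma aij_eq {V : Type*} {G : SimpleGraph V} (inst : DecidableRel G.Adj) (i j : V) :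
    aij G i j = if G.Adj i j then 1 else 0 := by
  by_cases h : G.Adj i j
  · rw [aij_of_adj h, if_pos h]
  · rw [aij_of_not_adj h, if_neg h]

lemma dg_eq {V : Type*} [Fintype V] {G : SimpleGraph V} (inst : DecidableRel G.Adj) (i : V) :
    dg G i = ((G.degree i : ℕ) : ℝ) := by
  rw [SimpleGraph.degree_eq_sum_if_adj]
  exact Finset.sum_congr rfl fun u _ => aij_eq inst i u

lemma lap_apply {V : Type*} [Fintype V] [DecidableEq V] (G : SimpleGraph V) (i j : V) :
    lap G i j = (if i = j then dg G i else 0) - aij G i j := by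
  unfold lap
  letI := Classical.decRel G.Adj
  rw [SimpleGraph.lapMatrix]
  simp only [Matrix.sub_apply, SimpleGraph.degMatrix, Matrix.diagonal_apply,
    SimpleGraph.adjMatrix_apply]
  rw [aij_eq ‹DecidableRel G.Adj›, dg_eq ‹DecidableRel G.Adj›]

set_option linter.unusedSectionVars false

lemma sum_subtype_ne {V : Type*} [Fintype V] [DecidableEq V] (v : V) (f : V → ℝ) :
    ∑ x : {x : V // x ≠ v}, f x.1 = (∑ x : V, f x) - f v := by
  have h := Finset.sum_subtype (p := fun x => x ≠ v) (F := inferInstance) (Finset.univ.erase v)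
    (fun x => by simp [Finset.mem_erase]) f
  rw [← h]
  exact eq_sub_of_add_eq (Finset.sum_erase_add _ _ (Finset.mem_univ v))

section Coal
variable {V₁ V₂ : Type*} [Fintype V₁] [DecidableEq V₁] [Fintype V₂] [DecidableEq V₂]
  (G₁ : SimpleGraph V₁) (G₂ : SimpleGraph V₂) (v₁ : V₁) (v₂ : V₂)

lemma aij_c_ll (a b : V₁) :
    aij (coalesce G₁ G₂ v₁ v₂) (Sum.inl a) (Sum.inl b) = aij G₁ a b :=
  aij_congr Iff.rfl

lemma aij_c_lr (a : V₁) (b : {x : V₂ // x ≠ v₂}) :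
    aij (coalesce G₁ G₂ v₁ v₂) (Sum.inl a) (Sum.inr b) =
      if a = v₁ then aij G₂ v₂ b.1 else 0 := by
  by_cases h : a = v₁
  · rw [if_pos h]
    exact aij_congr (by subst h; exact and_iff_right rfl)
  · rw [if_neg h]
    exact aij_of_not_adj (fun hc => h hc.1)

lemma aij_c_rl (a : V₁) (b : {x : V₂ // x ≠ v₂}) :
    aij (coalesce G₁ G₂ v₁ v₂) (Sum.inr b) (Sum.inl a) =
      if a = v₁ then aij G₂ v₂ b.1 else 0 := by
  by_cases h : a = v₁
  · rw [if_pos h]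
    exact aij_congr (by subst h; exact and_iff_right rfl)
  · rw [if_neg h]
    exact aij_of_not_adj (fun hc => h hc.1)

lemma aij_c_rr (b b' : {x : V₂ // x ≠ v₂}) :
    aij (coalesce G₁ G₂ v₁ v₂) (Sum.inr b) (Sum.inr b') = aij G₂ b.1 b'.1 :=
  aij_congr Iff.rfl

lemma dg_c_l (a : V₁) :
    dg (coalesce G₁ G₂ v₁ v₂) (Sum.inl a) =
      dg G₁ a + if a = v₁ then dg G₂ v₂ else 0 := by
  show (∑ u, aij (coalesce G₁ G₂ v₁ v₂) (Sum.inl a) u) = _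
  rw [Fintype.sum_sum_type]
  have h1 : ∑ b : V₁, aij (coalesce G₁ G₂ v₁ v₂) (Sum.inl a) (Sum.inl b) = dg G₁ a :=
    Finset.sum_congr rfl fun b _ => aij_c_ll G₁ G₂ v₁ v₂ a b
  have h2 : ∑ b : {x : V₂ // x ≠ v₂}, aij (coalesce G₁ G₂ v₁ v₂) (Sum.inl a) (Sum.inr b) =
      if a = v₁ then dg G₂ v₂ else 0 := by
    simp_rw [aij_c_lr G₁ G₂ v₁ v₂ a]
    by_cases h : a = v₁
    · simp only [if_pos h]
      rw [sum_subtype_ne v₂ (fun u => aij G₂ v₂ u), aij_self, sub_zero]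
      rfl
    · simp only [if_neg h, Finset.sum_const_zero]
  rw [h1, h2]

lemma dg_c_r (b : {x : V₂ // x ≠ v₂}) :
    dg (coalesce G₁ G₂ v₁ v₂) (Sum.inr b) = dg G₂ b.1 := by
  show (∑ u, aij (coalesce G₁ G₂ v₁ v₂) (Sum.inr b) u) = _
  rw [Fintype.sum_sum_type]
  simp_rw [aij_c_rl G₁ G₂ v₁ v₂ _ b, aij_c_rr G₁ G₂ v₁ v₂ b]
  rw [Finset.sum_ite_eq' Finset.univ v₁ (fun _ => aij G₂ v₂ b.1), if_pos (Finset.mem_univ v₁),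
    sum_subtype_ne v₂ (fun u => aij G₂ b.1 u), aij_comm G₂ b.1 v₂]
  show aij G₂ v₂ b.1 + (dg G₂ b.1 - aij G₂ v₂ b.1) = dg G₂ b.1
  ring

end Coal

section Entries
variable {V₁ V₂ : Type*} [Fintype V₁] [DecidableEq V₁] [Fintype V₂] [DecidableEq V₂]
  (G₁ : SimpleGraph V₁) (G₂ : SimpleGraph V₂) (v₁ : V₁) (v₂ : V₂)

lemma lapC_ll (a b : V₁) :
    lap (coalesce G₁ G₂ v₁ v₂) (Sum.inl a) (Sum.inl b) =
      lap G₁ a b + (if a = v₁ ∧ b = v₁ then dg G₂ v₂ else 0) := by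
  rw [lap_apply, lap_apply, aij_c_ll, dg_c_l]
  simp only [Sum.inl.injEq]
  by_cases hab : a = b
  · subst hab
    by_cases hav : a = v₁ <;> simp [hav] <;> ring
  · have hne : ¬(a = v₁ ∧ b = v₁) := fun h => hab (h.1.trans h.2.symm)
    simp [hab, hne]

lemma lapC_lr (a : V₁) (b : {x : V₂ // x ≠ v₂}) :
    lap (coalesce G₁ G₂ v₁ v₂) (Sum.inl a) (Sum.inr b) =
      if a = v₁ then -(aij G₂ v₂ b.1) else 0 := by
  rw [lap_apply, aij_c_lr]
  simp only [reduceCtorEq, if_false, zero_sub]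
  by_cases h : a = v₁ <;> simp [h]

lemma lapC_rl (a : V₁) (b : {x : V₂ // x ≠ v₂}) :
    lap (coalesce G₁ G₂ v₁ v₂) (Sum.inr b) (Sum.inl a) =
      if a = v₁ then -(aij G₂ v₂ b.1) else 0 := by
  rw [lap_apply, aij_c_rl]
  simp only [reduceCtorEq, if_false, zero_sub]
  by_cases h : a = v₁ <;> simp [h]

lemma lapC_rr (b b' : {x : V₂ // x ≠ v₂}) :
    lap (coalesce G₁ G₂ v₁ v₂) (Sum.inr b) (Sum.inr b') = lap G₂ b.1 b'.1 := by
  rw [lap_apply, lap_apply, aij_c_rr, dg_c_r]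
  congr 1
  exact if_congr (by simp [Subtype.ext_iff]) rfl rfl

lemma lap_diag {V : Type*} [Fintype V] [DecidableEq V] (G : SimpleGraph V) (i : V) :
    lap G i i = dg G i := by
  rw [lap_apply, if_pos rfl, aij_self, sub_zero]

lemma lap_offdiag {V : Type*} [Fintype V] [DecidableEq V] (G : SimpleGraph V) {i j : V}
    (h : i ≠ j) : lap G i j = -(aij G i j) := by
  rw [lap_apply, if_neg h, zero_sub]

end Entries

def coalEquiv {V₁ V₂ : Type*} [DecidableEq V₁] [DecidableEq V₂] (v₁ : V₁) (v₂ : V₂) :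
    ({x : V₁ // x ≠ v₁} ⊕ V₂) ≃ (V₁ ⊕ {x : V₂ // x ≠ v₂}) where
  toFun := Sum.elim (fun s => Sum.inl s.1)
    (fun y => if h : y = v₂ then Sum.inl v₁ else Sum.inr ⟨y, h⟩)
  invFun := Sum.elim (fun a => if h : a = v₁ then Sum.inr v₂ else Sum.inl ⟨a, h⟩)
    (fun b => Sum.inr b.1)
  left_inv := by
    rintro (s | y)
    · simp [dif_neg s.2]
    · by_cases h : y = v₂
      · subst h; simp
      · simp [h]
  right_inv := by
    rintro (a | b)
    · by_cases h : a = v₁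
      · subst h; simp
      · simp [h]
    · simp [dif_neg b.2]

@[simp] lemma coalEquiv_inl {V₁ V₂ : Type*} [DecidableEq V₁] [DecidableEq V₂]
    (v₁ : V₁) (v₂ : V₂) (s : {x : V₁ // x ≠ v₁}) :
    coalEquiv v₁ v₂ (Sum.inl s) = Sum.inl s.1 := rfl

@[simp] lemma coalEquiv_inr {V₁ V₂ : Type*} [DecidableEq V₁] [DecidableEq V₂]
    (v₁ : V₁) (v₂ : V₂) (y : V₂) :
    coalEquiv v₁ v₂ (Sum.inr y) =
      if h : y = v₂ then Sum.inl v₁ else Sum.inr ⟨y, h⟩ := rfl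

section Blocks
variable {V₁ V₂ : Type*} [Fintype V₁] [DecidableEq V₁] [Fintype V₂] [DecidableEq V₂]
  (G₁ : SimpleGraph V₁) (G₂ : SimpleGraph V₂) (v₁ : V₁) (v₂ : V₂)

lemma perm_M1 :
    (Matrix.updateRow (lap (coalesce G₁ G₂ v₁ v₂)) (Sum.inl v₁)
      (Sum.elim (fun b => lap G₁ v₁ b) (fun _ => 0))).permanent =
      (lap G₁).permanent * (del (lap G₂) v₂).permanent := by
  have hblock : Matrix.updateRow (lap (coalesce G₁ G₂ v₁ v₂)) (Sum.inl v₁)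
      (Sum.elim (fun b => lap G₁ v₁ b) (fun _ => 0)) =
      Matrix.fromBlocks (lap G₁) 0
        (Matrix.of fun (b : {x : V₂ // x ≠ v₂}) (a : V₁) =>
          if a = v₁ then -(aij G₂ v₂ b.1) else 0)
        (del (lap G₂) v₂) := by
    apply Matrix.ext
    rintro (a | b) (a' | b')
    · simp only [Matrix.updateRow_apply, Matrix.fromBlocks_apply₁₁, Sum.elim_inl,
        Sum.inl.injEq, lapC_ll]
      by_cases h : a = v₁
      · subst h; simp
      · simp [h]
    · simp only [Matrix.updateRow_apply, Matrix.fromBlocks_apply₁₂, Sum.elim_inr,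
        Sum.inl.injEq, lapC_lr, Matrix.zero_apply]
      by_cases h : a = v₁
      · subst h; simp
      · simp [h]
    · simp only [Matrix.updateRow_apply, Matrix.fromBlocks_apply₂₁, reduceCtorEq,
        if_false, lapC_rl, Matrix.of_apply]
    · simp only [Matrix.updateRow_apply, Matrix.fromBlocks_apply₂₂, reduceCtorEq,
        if_false, lapC_rr]
      rfl
  rw [hblock, permanent_fromBlocks_zero₁₂]

end Blocks


section Blocks2
variable {V₁ V₂ : Type*} [Fintype V₁] [DecidableEq V₁] [Fintype V₂] [DecidableEq V₂]
  (G₁ : SimpleGraph V₁) (G₂ : SimpleGraph V₂) (v₁ : V₁) (v₂ : V₂)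

lemma perm_NA_zero :
    (Matrix.updateCol
      (Matrix.updateRow (lap (coalesce G₁ G₂ v₁ v₂)) (Sum.inl v₁)
        (Sum.elim (fun b => if b = v₁ then dg G₂ v₂ else 0) (fun b => -(aij G₂ v₂ b.1))))
      (Sum.inl v₁)
      (Sum.elim (fun a => if a = v₁ then 0 else lap G₁ a v₁) (fun _ => 0))).permanent = 0 := by
  apply permanent_eq_zero_of_rows _
    (insert (Sum.inl v₁) ((Finset.univ : Finset {x : V₂ // x ≠ v₂}).image Sum.inr))
    ((Finset.univ : Finset {x : V₂ // x ≠ v₂}).image Sum.inr)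
  · rw [Finset.card_insert_of_notMem (by simp)]
    omega
  · intro t ht c hc
    rcases c with a | b
    swap
    · exact absurd (Finset.mem_image_of_mem _ (Finset.mem_univ b)) hc
    simp only [Finset.mem_insert, Finset.mem_image, Finset.mem_univ, true_and] at ht
    rw [Matrix.updateCol_apply]
    by_cases ha : a = v₁
    · rw [if_pos (by rw [ha])]
      rcases ht with rfl | ⟨b, rfl⟩
      · simp
      · simp
    · rw [if_neg (by simpa using ha)]
      rcases ht with rfl | ⟨b, rfl⟩
      · rw [Matrix.updateRow_self]
        simp [ha]
      · rw [Matrix.updateRow_ne (by simp), lapC_rl]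
        simp [ha]

lemma perm_NB :
    (Matrix.updateCol
      (Matrix.updateRow (lap (coalesce G₁ G₂ v₁ v₂)) (Sum.inl v₁)
        (Sum.elim (fun b => if b = v₁ then dg G₂ v₂ else 0) (fun b => -(aij G₂ v₂ b.1))))
      (Sum.inl v₁)
      (Sum.elim (fun a => if a = v₁ then dg G₂ v₂ else 0)
        (fun b => -(aij G₂ b.1 v₂)))).permanent =
      (del (lap G₁) v₁).permanent * (lap G₂).permanent := by
  rw [← permanent_submatrix_equiv _ (coalEquiv v₁ v₂)]
  have hb : (Matrix.updateCol
      (Matrix.updateRow (lap (coalesce G₁ G₂ v₁ v₂)) (Sum.inl v₁)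
        (Sum.elim (fun b => if b = v₁ then dg G₂ v₂ else 0) (fun b => -(aij G₂ v₂ b.1))))
      (Sum.inl v₁)
      (Sum.elim (fun a => if a = v₁ then dg G₂ v₂ else 0)
        (fun b => -(aij G₂ b.1 v₂)))).submatrix (coalEquiv v₁ v₂) (coalEquiv v₁ v₂) =
      Matrix.fromBlocks (del (lap G₁) v₁) 0 0 (lap G₂) := by
    apply Matrix.ext
    rintro (s | y) (s' | y')
    · -- (inl, inl)
      simp only [Matrix.submatrix_apply, coalEquiv_inl, Matrix.fromBlocks_apply₁₁]
      rw [Matrix.updateCol_apply, if_neg (by simpa using s'.2),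
        Matrix.updateRow_ne (by simpa using s.2), lapC_ll,
        if_neg (fun h => s.2 h.1), add_zero]
      rfl
    · -- (inl, inr)
      simp only [Matrix.submatrix_apply, coalEquiv_inl, coalEquiv_inr,
        Matrix.fromBlocks_apply₁₂, Matrix.zero_apply]
      by_cases h : y' = v₂
      · rw [dif_pos h, Matrix.updateCol_self, Sum.elim_inl, if_neg s.2]
      · rw [dif_neg h, Matrix.updateCol_apply, if_neg (by simp),
          Matrix.updateRow_ne (by simpa using s.2), lapC_lr, if_neg s.2]
    · -- (inr, inl)
      simp only [Matrix.submatrix_apply, coalEquiv_inl, coalEquiv_inr,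
        Matrix.fromBlocks_apply₂₁, Matrix.zero_apply]
      by_cases h : y = v₂
      · rw [dif_pos h, Matrix.updateCol_apply, if_neg (by simpa using s'.2),
          Matrix.updateRow_self, Sum.elim_inl, if_neg s'.2]
      · rw [dif_neg h, Matrix.updateCol_apply, if_neg (by simpa using s'.2),
          Matrix.updateRow_ne (by simp), lapC_rl, if_neg s'.2]
    · -- (inr, inr)
      simp only [Matrix.submatrix_apply, coalEquiv_inr, Matrix.fromBlocks_apply₂₂]
      by_cases h : y = v₂ <;> by_cases h' : y' = v₂
      · subst h; subst h'
        rw [dif_pos rfl, Matrix.updateCol_self, Sum.elim_inl, if_pos rfl, lap_diag]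
      · subst h
        rw [dif_pos rfl, dif_neg h', Matrix.updateCol_apply, if_neg (by simp),
          Matrix.updateRow_self, Sum.elim_inr, lap_offdiag G₂ (fun hh => h' hh.symm)]
      · subst h'
        rw [dif_pos rfl, dif_neg h, Matrix.updateCol_self, Sum.elim_inr,
          lap_offdiag G₂ h]
      · rw [dif_neg h, dif_neg h', Matrix.updateCol_apply, if_neg (by simp),
          Matrix.updateRow_ne (by simp), lapC_rr]
  rw [hb, permanent_fromBlocks_zero₁₂]

lemma perm_M2 :
    (Matrix.updateRow (lap (coalesce G₁ G₂ v₁ v₂)) (Sum.inl v₁)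
      (Sum.elim (fun b => if b = v₁ then dg G₂ v₂ else 0)
        (fun b => -(aij G₂ v₂ b.1)))).permanent =
      (del (lap G₁) v₁).permanent * (lap G₂).permanent := by
  have hcol : Matrix.updateRow (lap (coalesce G₁ G₂ v₁ v₂)) (Sum.inl v₁)
      (Sum.elim (fun b => if b = v₁ then dg G₂ v₂ else 0) (fun b => -(aij G₂ v₂ b.1))) =
      Matrix.updateCol
        (Matrix.updateRow (lap (coalesce G₁ G₂ v₁ v₂)) (Sum.inl v₁)
          (Sum.elim (fun b => if b = v₁ then dg G₂ v₂ else 0) (fun b => -(aij G₂ v₂ b.1))))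
        (Sum.inl v₁)
        ((Sum.elim (fun a => if a = v₁ then 0 else lap G₁ a v₁) (fun _ => 0)) +
         (Sum.elim (fun a => if a = v₁ then dg G₂ v₂ else 0) (fun b => -(aij G₂ b.1 v₂)))) := by
    apply Matrix.ext
    intro i j
    rw [Matrix.updateCol_apply]
    by_cases hj : j = Sum.inl v₁
    · rw [if_pos hj]
      subst hj
      rcases i with a | b
      · rw [Pi.add_apply, Sum.elim_inl, Sum.elim_inl]
        by_cases ha : a = v₁
        · subst ha
          rw [Matrix.updateRow_self]
          simp
        · rw [Matrix.updateRow_ne (by simpa using ha), lapC_ll]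
          simp [ha]
      · rw [Pi.add_apply, Sum.elim_inr, Sum.elim_inr,
          Matrix.updateRow_ne (by simp), lapC_rl, if_pos rfl, aij_comm, zero_add]
    · rw [if_neg hj]
  conv_lhs => rw [hcol]
  rw [permanent_updateColumn_add, perm_NA_zero, zero_add, perm_NB]

end Blocks2

/-- Permanent expansion for the Laplacian of a vertex coalescence:
`per(L_G) = per(L_{G₁})·per(L_{G₂}(v₂)) + per(L_{G₁}(v₁))·per(L_{G₂})`. -/
theorem permanent_lap_coalesce {V₁ V₂ : Type*} [Fintype V₁] [DecidableEq V₁]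
    [Fintype V₂] [DecidableEq V₂] (G₁ : SimpleGraph V₁) (G₂ : SimpleGraph V₂)
    (v₁ : V₁) (v₂ : V₂) :
    (lap (coalesce G₁ G₂ v₁ v₂)).permanent =
      (lap G₁).permanent * (del (lap G₂) v₂).permanent +
        (del (lap G₁) v₁).permanent * (lap G₂).permanent := by

  have hsplit : lap (coalesce G₁ G₂ v₁ v₂) =
      Matrix.updateRow (lap (coalesce G₁ G₂ v₁ v₂)) (Sum.inl v₁)
        ((Sum.elim (fun b => lap G₁ v₁ b) (fun _ => 0)) +
         (Sum.elim (fun b => if b = v₁ then dg G₂ v₂ else 0)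
           (fun b => -(aij G₂ v₂ b.1)))) := by
    apply Matrix.ext
    intro i j
    rw [Matrix.updateRow_apply]
    by_cases hi : i = Sum.inl v₁
    · rw [if_pos hi]
      subst hi
      rcases j with b | b
      · rw [Pi.add_apply, Sum.elim_inl, Sum.elim_inl, lapC_ll]
        by_cases hb : b = v₁
        · rw [if_pos ⟨rfl, hb⟩, if_pos hb]
        · rw [if_neg (fun h => hb h.2), if_neg hb]
      · rw [Pi.add_apply, Sum.elim_inr, Sum.elim_inr, lapC_lr, if_pos rfl, zero_add]
    · rw [if_neg hi]
  conv_lhs => rw [hsplit]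
  rw [permanent_updateRow_add, perm_M1, perm_M2]
end

section
/- Let A be a real positive semidefinite n×n matrix and fix an index i. Assume per(A ∘ A) ≤ per(A)² and per(A(i) ∘ A(i)) ≤ per(A(i))². Then for every α ≥ 0, the matrix A' = A + α·E_{ii} satisfies per(A' ∘ A') ≤ per(A')². -/
open Matrix Equiv Finset

set_option linter.unusedSectionVars false
set_option maxHeartbeats 1000000

namespace PermPSD

variable {m : Type*} [Fintype m] [DecidableEq m]

/-- Product of entries of `B` selected by `g`. -/
def T {n : Type*} [Fintype n] (B : Matrix m n ℝ) (g : n → m) : ℝ := ∏ k, B (g k) k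

/-- precomposition equivalence -/
def precomp {n : Type*} [Fintype n] [DecidableEq n] (τ : Perm n) : (n → m) ≃ (n → m) where
  toFun g := g ∘ τ
  invFun g := g ∘ τ.symm
  left_inv g := by ext k; simp
  right_inv g := by ext k; simp

section general

variable {n : Type*} [Fintype n] [DecidableEq n]

lemma perm_expand (B : Matrix m n ℝ) (A : Matrix n n ℝ)
    (hrep : ∀ x y, A x y = ∑ a, B a x * B a y) :
    A.permanent = ∑ σ : Perm n, ∑ g : n → m, T B g * T B (g ∘ σ) := by
  unfold Matrix.permanent
  refine Finset.sum_congr rfl fun σ _ => ?_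
  calc ∏ k, A (σ k) k = ∏ k, ∑ a, B a (σ k) * B a k := by
        refine Finset.prod_congr rfl fun k _ => hrep _ _
    _ = ∑ g : n → m, ∏ k, B (g k) (σ k) * B (g k) k := Fintype.prod_sum _
    _ = ∑ g : n → m, T B g * T B (g ∘ σ) := by
        rw [← Equiv.sum_comp (precomp σ)]
        refine Finset.sum_congr rfl fun g _ => ?_
        have h1 : ∏ k, B ((precomp σ g) k) (σ k) = T B g := by
          unfold T precomp
          simpa using Equiv.prod_comp σ (fun k => B (g k) k)
        rw [Finset.prod_mul_distrib, h1]
        rfl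

lemma F_comp_perm (B : Matrix m n ℝ) (g : n → m) (τ : Perm n) :
    ∑ σ : Perm n, T B ((g ∘ τ) ∘ σ) = ∑ σ : Perm n, T B (g ∘ σ) := by
  have h := Equiv.sum_comp (Equiv.mulLeft τ) (fun σ => T B (g ∘ σ))
  refine Eq.trans ?_ h
  refine Finset.sum_congr rfl fun σ _ => ?_
  congr 1

lemma sum_F_sq (B : Matrix m n ℝ) (A : Matrix n n ℝ)
    (hrep : ∀ x y, A x y = ∑ a, B a x * B a y) :
    ∑ g : n → m, (∑ σ : Perm n, T B (g ∘ σ)) ^ 2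
      = (Nat.factorial (Fintype.card n) : ℝ) * A.permanent := by
  have key : ∀ τ : Perm n, (∑ g : n → m, T B (g ∘ τ) * (∑ σ : Perm n, T B (g ∘ σ)))
      = A.permanent := by
    intro τ
    rw [← Equiv.sum_comp (precomp τ.symm)]
    have : ∀ g : n → m, (precomp (m := m) τ.symm g) ∘ τ = g := by
      intro g; ext k; simp [precomp]
    calc ∑ g : n → m, T B ((precomp τ.symm g) ∘ τ) * (∑ σ : Perm n, T B ((precomp τ.symm g) ∘ σ))
        = ∑ g : n → m, T B g * (∑ σ : Perm n, T B (g ∘ σ)) := by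
          refine Finset.sum_congr rfl fun g _ => ?_
          rw [this g]
          congr 1
          have := F_comp_perm B g τ.symm
          exact this
      _ = A.permanent := by
          rw [perm_expand B A hrep, Finset.sum_comm]
          exact Finset.sum_congr rfl fun g _ => Finset.mul_sum _ _ _
  calc ∑ g : n → m, (∑ σ : Perm n, T B (g ∘ σ)) ^ 2
      = ∑ g : n → m, ∑ τ : Perm n, T B (g ∘ τ) * (∑ σ : Perm n, T B (g ∘ σ)) := by
        refine Finset.sum_congr rfl fun g _ => ?_
        rw [sq, Finset.sum_mul]
    _ = ∑ τ : Perm n, ∑ g : n → m, T B (g ∘ τ) * (∑ σ : Perm n, T B (g ∘ σ)) :=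
        Finset.sum_comm
    _ = ∑ _τ : Perm n, A.permanent := Finset.sum_congr rfl fun τ _ => key τ
    _ = (Nat.factorial (Fintype.card n) : ℝ) * A.permanent := by
        rw [Finset.sum_const, card_univ, Fintype.card_perm, nsmul_eq_mul]

lemma permanent_nonneg_of_rep (B : Matrix m n ℝ) (A : Matrix n n ℝ)
    (hrep : ∀ x y, A x y = ∑ a, B a x * B a y) : 0 ≤ A.permanent := by
  have h := sum_F_sq B A hrep
  have h0 : (0:ℝ) ≤ (Nat.factorial (Fintype.card n) : ℝ) * A.permanent := by
    rw [← h]; exact Finset.sum_nonneg fun g _ => sq_nonneg _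
  have hc : (0:ℝ) < (Nat.factorial (Fintype.card n) : ℝ) := by
    exact_mod_cast Nat.factorial_pos _
  nlinarith

end general

open scoped MatrixOrder in
lemma rep_of_posSemidef {n : Type*} [Fintype n] [DecidableEq n] {A : Matrix n n ℝ}
    (hA : A.PosSemidef) : ∃ B : Matrix n n ℝ, ∀ x y, A x y = ∑ a, B a x * B a y := by
  obtain ⟨B, hB⟩ := CStarAlgebra.nonneg_iff_eq_star_mul_self.mp hA.nonneg
  exact ⟨B, fun x y => by rw [hB]; simp [Matrix.mul_apply]⟩

lemma permanent_nonneg {n : Type*} [Fintype n] [DecidableEq n] {A : Matrix n n ℝ}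
    (hA : A.PosSemidef) : 0 ≤ A.permanent := by
  obtain ⟨B, hB⟩ := rep_of_posSemidef hA
  exact permanent_nonneg_of_rep B A hB

section fin

variable {N : ℕ} (B : Matrix m (Fin (N + 1)) ℝ)

/-- sum over permutations sending `0` to `j` of `T B (g ∘ σ)` with the `0` factor removed -/
def H (j : Fin (N + 1)) (g : Fin (N + 1) → m) : ℝ :=
  ∑ σ ∈ univ.filter (fun σ : Perm (Fin (N + 1)) => σ 0 = j),
    ∏ k ∈ univ.erase 0, B (g (σ k)) k

def G (j : Fin (N + 1)) (g : Fin (N + 1) → m) : ℝ :=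
  ∑ σ ∈ univ.filter (fun σ : Perm (Fin (N + 1)) => σ 0 = j), T B (g ∘ σ)

lemma G_eq (j : Fin (N + 1)) (g : Fin (N + 1) → m) :
    G B j g = B (g j) 0 * H B j g := by
  unfold G H T
  rw [Finset.mul_sum]
  refine Finset.sum_congr rfl fun σ hσ => ?_
  have hσ0 : σ 0 = j := (Finset.mem_filter.mp hσ).2
  rw [← Finset.mul_prod_erase univ _ (Finset.mem_univ (0 : Fin (N+1)))]
  simp [Function.comp, hσ0]

lemma H_update (j : Fin (N + 1)) (g : Fin (N + 1) → m) (a : m) :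
    H B j (Function.update g j a) = H B j g := by
  unfold H
  refine Finset.sum_congr rfl fun σ hσ => Finset.prod_congr rfl fun k hk => ?_
  have hσ0 : σ 0 = j := (Finset.mem_filter.mp hσ).2
  have hk0 : k ≠ 0 := Finset.ne_of_mem_erase hk
  have : σ k ≠ j := by
    rw [← hσ0]
    exact fun h => hk0 (σ.injective h)
  rw [Function.update_of_ne this]

lemma F_eq_sum_G (g : Fin (N + 1) → m) :
    ∑ σ : Perm (Fin (N + 1)), T B (g ∘ σ) = ∑ j, G B j g :=
  (Finset.sum_fiberwise univ (fun σ : Perm (Fin (N+1)) => σ 0) (fun σ => T B (g ∘ σ))).symm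

/-- reindexing lemma : `G j` is `G 0` after precomposing with a swap -/
lemma G_swap (j : Fin (N + 1)) (g : Fin (N + 1) → m) :
    G B j g = G B 0 (g ∘ (Equiv.swap 0 j)) := by
  unfold G
  refine Finset.sum_bij' (fun σ _ => (Equiv.swap (0 : Fin (N+1)) j) * σ)
    (fun σ _ => (Equiv.swap (0 : Fin (N+1)) j) * σ) ?_ ?_ ?_ ?_ ?_
  · intro σ hσ
    have hσ0 : σ 0 = j := (Finset.mem_filter.mp hσ).2
    simp [Equiv.Perm.mul_apply, hσ0]
  · intro σ hσ
    have hσ0 : σ 0 = 0 := (Finset.mem_filter.mp hσ).2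
    simp [Equiv.Perm.mul_apply, hσ0]
  · intro σ _; ext x; simp [Equiv.Perm.mul_apply]
  · intro σ _; ext x; simp [Equiv.Perm.mul_apply]
  · intro σ hσ
    congr 1
    ext k
    simp [Equiv.Perm.mul_apply]

lemma sum_G_sq (j : Fin (N + 1)) :
    ∑ g : Fin (N + 1) → m, (G B j g) ^ 2 = ∑ g : Fin (N + 1) → m, (G B 0 g) ^ 2 := by
  calc ∑ g : Fin (N + 1) → m, (G B j g) ^ 2
      = ∑ g : Fin (N + 1) → m, (G B 0 (g ∘ (Equiv.swap 0 j))) ^ 2 := by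
        refine Finset.sum_congr rfl fun g _ => ?_; rw [G_swap]
    _ = ∑ g : Fin (N + 1) → m, (G B 0 g) ^ 2 :=
        Equiv.sum_comp (precomp (Equiv.swap 0 j)) (fun g => (G B 0 g)^2)

lemma sum_update_update (j l : Fin (N+1)) (hjl : j ≠ l) (φ : (Fin (N+1) → m) → ℝ) :
    ∑ g : Fin (N+1) → m, ∑ a : m, ∑ b : m, φ (Function.update (Function.update g j a) l b)
      = (Fintype.card m : ℝ)^2 * ∑ g : Fin (N+1) → m, φ g := by
  have hinv : Function.Involutive
      (fun x : (Fin (N+1) → m) × m × m =>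
        ((Function.update (Function.update x.1 j x.2.1) l x.2.2, x.1 j, x.1 l) :
          (Fin (N+1) → m) × m × m)) := by
    rintro ⟨g, a, b⟩
    simp only [Prod.mk.injEq]
    refine ⟨?_, ?_, ?_⟩
    · funext x
      rcases eq_or_ne x j with rfl | hxj
      · simp [Function.update_of_ne hjl, Function.update_of_ne, hjl]
      · rcases eq_or_ne x l with rfl | hxl
        · simp
        · simp [Function.update_of_ne hxj, Function.update_of_ne hxl]
    · simp [Function.update_of_ne hjl]
    · simp
  have h1 : ∑ x : (Fin (N+1) → m) × m × m, φ ((hinv.toPerm _ x).1)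
      = ∑ x : (Fin (N+1) → m) × m × m, φ x.1 := Equiv.sum_comp (hinv.toPerm _) (fun x => φ x.1)
  have h2 : ∑ x : (Fin (N+1) → m) × m × m, φ ((hinv.toPerm _ x).1)
      = ∑ g : Fin (N+1) → m, ∑ a : m, ∑ b : m,
          φ (Function.update (Function.update g j a) l b) := by
    rw [Fintype.sum_prod_type]
    refine Finset.sum_congr rfl fun g _ => ?_
    rw [Fintype.sum_prod_type]
    simp [Function.Involutive.coe_toPerm]
  have h3 : ∑ x : (Fin (N+1) → m) × m × m, φ x.1
      = (Fintype.card m : ℝ)^2 * ∑ g : Fin (N+1) → m, φ g := by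
    rw [Fintype.sum_prod_type]
    simp [Finset.sum_const, card_univ]
    rw [← Finset.mul_sum]
    ring
  rw [← h2, h1, h3]

def Xf (j l : Fin (N + 1)) (g : Fin (N + 1) → m) : ℝ :=
  ∑ a : m, B a 0 * H B l (Function.update g j a)

lemma Xf_expand (j l : Fin (N + 1)) (hjl : j ≠ l) (g : Fin (N + 1) → m) :
    Xf B j l g = ∑ τ ∈ univ.filter (fun τ : Perm (Fin (N + 1)) => τ 0 = l),
      (∑ a : m, B a 0 * B a (τ⁻¹ j)) *
        ∏ k ∈ (univ.erase 0).erase (τ⁻¹ j), B (g (τ k)) k := by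
  unfold Xf H
  simp_rw [Finset.mul_sum]
  rw [Finset.sum_comm]
  refine Finset.sum_congr rfl fun τ hτ => ?_
  have hτ0 : τ 0 = l := (Finset.mem_filter.mp hτ).2
  have hk0 : τ⁻¹ j ≠ 0 := by
    intro h
    apply hjl
    rw [← (show τ (τ⁻¹ j) = j from τ.apply_symm_apply j), h, hτ0]
  have hmem : τ⁻¹ j ∈ univ.erase (0 : Fin (N+1)) := Finset.mem_erase.mpr ⟨hk0, Finset.mem_univ _⟩
  rw [Finset.sum_mul]
  refine Finset.sum_congr rfl fun a _ => ?_
  rw [← Finset.mul_prod_erase _ _ hmem]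
  have h1 : Function.update g j a (τ (τ⁻¹ j)) = a := by
    rw [show τ (τ⁻¹ j) = j from τ.apply_symm_apply j]; simp
  have h2 : ∀ k ∈ (univ.erase (0 : Fin (N+1))).erase (τ⁻¹ j),
      Function.update g j a (τ k) = g (τ k) := by
    intro k hk
    have hkk : k ≠ τ⁻¹ j := (Finset.mem_erase.mp hk).1
    have : τ k ≠ j := by
      intro h
      exact hkk (by rw [← h]; simp)
    rw [Function.update_of_ne this]
  rw [h1]
  rw [show (∏ x ∈ (univ.erase (0:Fin (N+1))).erase (τ⁻¹ j), B (Function.update g j a (τ x)) x)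
      = ∏ k ∈ (univ.erase (0:Fin (N+1))).erase (τ⁻¹ j), B (g (τ k)) k from
    Finset.prod_congr rfl fun k hk => by rw [h2 k hk]]
  ring

lemma Xf_symm (j l : Fin (N + 1)) (hjl : j ≠ l) (g : Fin (N + 1) → m) :
    Xf B j l g = Xf B l j g := by
  rw [Xf_expand B j l hjl g, Xf_expand B l j hjl.symm g]
  refine Finset.sum_bij' (fun τ _ => τ * Equiv.swap 0 (τ⁻¹ j))
    (fun σ _ => σ * Equiv.swap 0 (σ⁻¹ l)) ?_ ?_ ?_ ?_ ?_
  · intro τ hτ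
    have hτ0 : τ 0 = l := (Finset.mem_filter.mp hτ).2
    simp only [Finset.mem_filter, Finset.mem_univ, true_and, Equiv.Perm.mul_apply,
      Equiv.swap_apply_left]
    exact τ.apply_symm_apply j
  · intro σ hσ
    have hσ0 : σ 0 = j := (Finset.mem_filter.mp hσ).2
    simp only [Finset.mem_filter, Finset.mem_univ, true_and, Equiv.Perm.mul_apply,
      Equiv.swap_apply_left]
    exact σ.apply_symm_apply l
  · intro τ hτ
    have hτ0 : τ 0 = l := (Finset.mem_filter.mp hτ).2
    have hinv : (τ * Equiv.swap 0 (τ⁻¹ j))⁻¹ l = τ⁻¹ j := by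
      rw [_root_.mul_inv_rev, Equiv.Perm.mul_apply]
      have : τ⁻¹ l = 0 := by rw [← hτ0]; simp
      rw [this]
      simp [Equiv.swap_inv]
    rw [hinv]
    rw [mul_assoc, Equiv.swap_mul_self, mul_one]
  · intro σ hσ
    have hσ0 : σ 0 = j := (Finset.mem_filter.mp hσ).2
    have hinv : (σ * Equiv.swap 0 (σ⁻¹ l))⁻¹ j = σ⁻¹ l := by
      rw [_root_.mul_inv_rev, Equiv.Perm.mul_apply]
      have : σ⁻¹ j = 0 := by rw [← hσ0]; simp
      rw [this]
      simp [Equiv.swap_inv]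
    rw [hinv]
    rw [mul_assoc, Equiv.swap_mul_self, mul_one]
  · intro τ hτ
    have hτ0 : τ 0 = l := (Finset.mem_filter.mp hτ).2
    have hinv : (τ * Equiv.swap 0 (τ⁻¹ j))⁻¹ l = τ⁻¹ j := by
      rw [_root_.mul_inv_rev, Equiv.Perm.mul_apply]
      have : τ⁻¹ l = 0 := by rw [← hτ0]; simp
      rw [this]
      simp [Equiv.swap_inv]
    rw [hinv]
    congr 1
    refine Finset.prod_congr rfl fun k hk => ?_
    have hkk : k ≠ τ⁻¹ j := (Finset.mem_erase.mp hk).1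
    have hk0 : k ≠ 0 := by
      have := Finset.mem_erase.mp (Finset.mem_erase.mp hk).2
      exact this.1
    congr 1
    rw [Equiv.Perm.mul_apply, Equiv.swap_apply_of_ne_of_ne hk0 hkk]

lemma cross_nonneg [Nonempty m] (j l : Fin (N + 1)) (hjl : j ≠ l) :
    0 ≤ ∑ g : Fin (N + 1) → m, G B j g * G B l g := by
  have main : ∀ (g : Fin (N+1) → m) (a b : m),
      G B j (Function.update (Function.update g j a) l b)
        * G B l (Function.update (Function.update g j a) l b)
      = (B a 0 * H B l (Function.update g j a)) * (B b 0 * H B j (Function.update g l b)) := by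
    intro g a b
    rw [G_eq, G_eq]
    have hj : (Function.update (Function.update g j a) l b) j = a := by
      rw [Function.update_of_ne hjl, Function.update_self]
    have hl : (Function.update (Function.update g j a) l b) l = b := Function.update_self _ _ _
    have hHj : H B j (Function.update (Function.update g j a) l b)
        = H B j (Function.update g l b) := by
      rw [Function.update_comm hjl, H_update]
    have hHl : H B l (Function.update (Function.update g j a) l b)
        = H B l (Function.update g j a) := H_update _ _ _ _
    rw [hj, hl, hHj, hHl]
    ring
  have step : ∀ g : Fin (N+1) → m,
      (∑ a : m, ∑ b : m, G B j (Function.update (Function.update g j a) l b)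
        * G B l (Function.update (Function.update g j a) l b)) = (Xf B j l g)^2 := by
    intro g
    calc (∑ a : m, ∑ b : m, G B j (Function.update (Function.update g j a) l b)
        * G B l (Function.update (Function.update g j a) l b))
        = ∑ a : m, ∑ b : m, (B a 0 * H B l (Function.update g j a))
            * (B b 0 * H B j (Function.update g l b)) := by
          exact Finset.sum_congr rfl fun a _ => Finset.sum_congr rfl fun b _ => main g a b
      _ = (∑ a : m, B a 0 * H B l (Function.update g j a))
            * (∑ b : m, B b 0 * H B j (Function.update g l b)) :=
          (Finset.sum_mul_sum _ _ _ _).symm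
      _ = Xf B j l g * Xf B l j g := rfl
      _ = (Xf B j l g)^2 := by rw [← Xf_symm B j l hjl g]; ring
  have hU := sum_update_update j l hjl (fun g => G B j g * G B l g)
  have hL : ∑ g : Fin (N+1) → m, ∑ a : m, ∑ b : m,
      G B j (Function.update (Function.update g j a) l b)
        * G B l (Function.update (Function.update g j a) l b)
      = ∑ g : Fin (N+1) → m, (Xf B j l g)^2 :=
    Finset.sum_congr rfl fun g _ => step g
  have h0 : (0:ℝ) ≤ (Fintype.card m : ℝ)^2 * ∑ g : Fin (N+1) → m, G B j g * G B l g := by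
    rw [← hU, hL]
    exact Finset.sum_nonneg fun g _ => sq_nonneg _
  have hc : (0:ℝ) < (Fintype.card m : ℝ)^2 := by
    have : 0 < Fintype.card m := Fintype.card_pos
    positivity
  nlinarith

lemma sum_filter_perm_eq (j : Fin (N + 1)) (f : Perm (Fin (N + 1)) → ℝ) :
    ∑ σ ∈ univ.filter (fun σ : Perm (Fin (N + 1)) => σ 0 = j), f σ
      = ∑ τ : Perm (Fin N), f (Equiv.Perm.decomposeFin.symm (j, τ)) := by
  have hfst : ∀ σ : Perm (Fin (N+1)), (Equiv.Perm.decomposeFin σ).1 = σ 0 := by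
    intro σ
    have h := Equiv.Perm.decomposeFin_symm_apply_zero
      (Equiv.Perm.decomposeFin σ).1 (Equiv.Perm.decomposeFin σ).2
    exact (by simpa using h : σ 0 = _).symm
  refine Finset.sum_bij' (fun σ _ => (Equiv.Perm.decomposeFin σ).2)
    (fun τ _ => Equiv.Perm.decomposeFin.symm (j, τ)) ?_ ?_ ?_ ?_ ?_
  · intro σ _; exact Finset.mem_univ _
  · intro τ _
    simp [Equiv.Perm.decomposeFin_symm_apply_zero]
  · intro σ hσ
    have hσ0 : σ 0 = j := (Finset.mem_filter.mp hσ).2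
    rw [Equiv.symm_apply_eq]
    ext
    · simp [hfst, hσ0]
    · simp
  · intro τ _
    simp
  · intro σ hσ
    have hσ0 : σ 0 = j := (Finset.mem_filter.mp hσ).2
    congr 1
    rw [eq_comm, Equiv.symm_apply_eq]
    ext
    · simp [hfst, hσ0]
    · simp

lemma prod_erase_zero (f : Fin (N + 1) → ℝ) :
    ∏ k ∈ univ.erase 0, f k = ∏ k : Fin N, f k.succ := by
  refine (Finset.prod_bij' (fun (k : Fin (N+1)) (hk : k ∈ univ.erase 0) => k.pred
      (Finset.ne_of_mem_erase hk)) (fun (k : Fin N) _ => k.succ) ?_ ?_ ?_ ?_ ?_)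
  · intro k hk; exact Finset.mem_univ _
  · intro k _
    exact Finset.mem_erase.mpr ⟨Fin.succ_ne_zero _, Finset.mem_univ _⟩
  · intro k hk; exact Fin.succ_pred _ _
  · intro k _; exact Fin.pred_succ _
  · intro k hk
    rw [Fin.succ_pred]

lemma H_zero_eq (g : Fin (N + 1) → m) :
    H B 0 g = ∑ τ : Perm (Fin N), T (B.submatrix id Fin.succ) ((g ∘ Fin.succ) ∘ τ) := by
  unfold H
  rw [sum_filter_perm_eq]
  refine Finset.sum_congr rfl fun τ _ => ?_
  rw [prod_erase_zero]
  unfold T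
  refine Finset.prod_congr rfl fun k _ => ?_
  rw [Equiv.Perm.decomposeFin_symm_apply_succ]
  simp [Matrix.submatrix_apply]

lemma sum_G0_sq (A : Matrix (Fin (N + 1)) (Fin (N + 1)) ℝ)
    (hrep : ∀ x y, A x y = ∑ a, B a x * B a y) :
    ∑ g : Fin (N + 1) → m, (G B 0 g) ^ 2
      = A 0 0 * ((Nat.factorial N : ℝ) * (A.submatrix Fin.succ Fin.succ).permanent) := by
  have hrep' : ∀ x y, (A.submatrix Fin.succ Fin.succ) x y
      = ∑ a, (B.submatrix id Fin.succ) a x * (B.submatrix id Fin.succ) a y := by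
    intro x y
    simp [Matrix.submatrix_apply, hrep]
  have hFsq := sum_F_sq (B.submatrix id Fin.succ) (A.submatrix Fin.succ Fin.succ) hrep'
  rw [Fintype.card_fin] at hFsq
  have e := Fin.consEquiv (fun _ : Fin (N+1) => m)
  calc ∑ g : Fin (N + 1) → m, (G B 0 g) ^ 2
      = ∑ g : Fin (N + 1) → m, (B (g 0) 0)^2
          * (∑ τ : Perm (Fin N), T (B.submatrix id Fin.succ) ((g ∘ Fin.succ) ∘ τ))^2 := by
        refine Finset.sum_congr rfl fun g _ => ?_
        rw [G_eq, H_zero_eq, mul_pow]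
    _ = ∑ p : m × (Fin N → m), (B p.1 0)^2
          * (∑ τ : Perm (Fin N), T (B.submatrix id Fin.succ) (p.2 ∘ τ))^2 := by
        rw [← Equiv.sum_comp (Fin.consEquiv (fun _ : Fin (N+1) => m))]
        refine Finset.sum_congr rfl fun p _ => ?_
        have h0 : (Fin.consEquiv (fun _ : Fin (N+1) => m)) p 0 = p.1 := rfl
        have hs : ((Fin.consEquiv (fun _ : Fin (N+1) => m)) p) ∘ Fin.succ = p.2 := by
          ext k; simp [Fin.consEquiv]
        rw [h0, hs]
    _ = (∑ a : m, (B a 0)^2) * ∑ h : Fin N → m,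
          (∑ τ : Perm (Fin N), T (B.submatrix id Fin.succ) (h ∘ τ))^2 := by
        rw [Fintype.sum_prod_type]
        dsimp only
        rw [← Finset.sum_mul_sum]
    _ = A 0 0 * ((Nat.factorial N : ℝ) * (A.submatrix Fin.succ Fin.succ).permanent) := by
        rw [hFsq, hrep 0 0]
        congr 1
        exact Finset.sum_congr rfl fun a _ => (sq (B a 0)).symm ▸ by ring

lemma key_zero (A : Matrix (Fin (N + 1)) (Fin (N + 1)) ℝ) (hA : A.PosSemidef) :
    A 0 0 * (A.submatrix Fin.succ Fin.succ).permanent ≤ A.permanent := by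
  obtain ⟨B, hrep⟩ := rep_of_posSemidef hA
  have hFsq := sum_F_sq B A hrep
  rw [Fintype.card_fin] at hFsq
  have expand : ∑ g : Fin (N+1) → Fin (N+1), (∑ σ : Perm (Fin (N+1)), T B (g ∘ σ))^2
      = ∑ j : Fin (N+1), ∑ l : Fin (N+1), ∑ g : Fin (N+1) → Fin (N+1), G B j g * G B l g := by
    calc ∑ g : Fin (N+1) → Fin (N+1), (∑ σ : Perm (Fin (N+1)), T B (g ∘ σ))^2
        = ∑ g : Fin (N+1) → Fin (N+1), ∑ j, ∑ l, G B j g * G B l g := by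
          refine Finset.sum_congr rfl fun g _ => ?_
          rw [F_eq_sum_G, sq, Finset.sum_mul_sum]
      _ = ∑ j : Fin (N+1), ∑ l : Fin (N+1), ∑ g : Fin (N+1) → Fin (N+1), G B j g * G B l g := by
          rw [Finset.sum_comm]
          refine Finset.sum_congr rfl fun j _ => Finset.sum_comm
  have lower : ∀ j : Fin (N+1),
      ∑ g : Fin (N+1) → Fin (N+1), (G B 0 g)^2
        ≤ ∑ l : Fin (N+1), ∑ g : Fin (N+1) → Fin (N+1), G B j g * G B l g := by
    intro j
    have hsplit : ∑ l : Fin (N+1), ∑ g : Fin (N+1) → Fin (N+1), G B j g * G B l g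
        = (∑ g : Fin (N+1) → Fin (N+1), G B j g * G B j g)
          + ∑ l ∈ univ.erase j, ∑ g : Fin (N+1) → Fin (N+1), G B j g * G B l g :=
      (Finset.add_sum_erase univ _ (Finset.mem_univ j)).symm
    rw [hsplit]
    have h1 : ∑ g : Fin (N+1) → Fin (N+1), G B j g * G B j g
        = ∑ g : Fin (N+1) → Fin (N+1), (G B 0 g)^2 := by
      rw [← sum_G_sq B j]
      exact Finset.sum_congr rfl fun g _ => (sq _).symm
    have h2 : 0 ≤ ∑ l ∈ univ.erase j, ∑ g : Fin (N+1) → Fin (N+1), G B j g * G B l g :=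
      Finset.sum_nonneg fun l hl =>
        cross_nonneg B j l (fun h => (Finset.mem_erase.mp hl).1 h.symm)
    linarith
  have total : ((N+1) : ℝ) * ∑ g : Fin (N+1) → Fin (N+1), (G B 0 g)^2
      ≤ ∑ g : Fin (N+1) → Fin (N+1), (∑ σ : Perm (Fin (N+1)), T B (g ∘ σ))^2 := by
    rw [expand]
    calc ((N+1) : ℝ) * ∑ g : Fin (N+1) → Fin (N+1), (G B 0 g)^2
        = ∑ _j : Fin (N+1), ∑ g : Fin (N+1) → Fin (N+1), (G B 0 g)^2 := by
          rw [Finset.sum_const, card_univ, Fintype.card_fin, nsmul_eq_mul]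
          push_cast
          ring
      _ ≤ ∑ j : Fin (N+1), ∑ l : Fin (N+1), ∑ g : Fin (N+1) → Fin (N+1), G B j g * G B l g :=
          Finset.sum_le_sum fun j _ => lower j
  rw [hFsq, sum_G0_sq B A hrep] at total
  have hfac : ((N+1).factorial : ℝ) = ((N+1) : ℝ) * (N.factorial : ℝ) := by
    rw [Nat.factorial_succ]; push_cast; ring
  rw [hfac] at total
  have hpos : (0:ℝ) < ((N+1) : ℝ) * (N.factorial : ℝ) := by
    have : (0:ℝ) < (N.factorial : ℝ) := by exact_mod_cast Nat.factorial_pos N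
    positivity
  nlinarith

/-- expansion of permanent after adding `c` at the `(0,0)` entry -/
lemma permanent_add_std (M : Matrix (Fin (N + 1)) (Fin (N + 1)) ℝ) (c : ℝ) :
    (M + Matrix.single 0 0 c).permanent
      = M.permanent + c * (M.submatrix Fin.succ Fin.succ).permanent := by
  unfold Matrix.permanent
  have hterm : ∀ σ : Perm (Fin (N+1)),
      ∏ k, (M + Matrix.single 0 0 c : Matrix (Fin (N+1)) (Fin (N+1)) ℝ) (σ k) k
        = ∏ k, M (σ k) k
          + (if σ 0 = 0 then c * ∏ k : Fin N, M (σ k.succ) k.succ else 0) := by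
    intro σ
    rw [Fin.prod_univ_succ, Fin.prod_univ_succ (f := fun k => M (σ k) k)]
    have hsucc : ∀ k : Fin N, (M + Matrix.single 0 0 c : Matrix (Fin (N+1)) (Fin (N+1)) ℝ) (σ k.succ) k.succ
        = M (σ k.succ) k.succ := by
      intro k
      simp [Matrix.single, (Fin.succ_ne_zero k).symm]
    rw [Finset.prod_congr rfl fun k _ => hsucc k]
    have h0 : (M + Matrix.single 0 0 c : Matrix (Fin (N+1)) (Fin (N+1)) ℝ) (σ 0) 0
        = M (σ 0) 0 + (if σ 0 = 0 then c else 0) := by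
      simp [Matrix.single, eq_comm]
    rw [h0]
    rcases eq_or_ne (σ 0) 0 with h | h
    · simp [h]; ring
    · simp [h]
  rw [Finset.sum_congr rfl fun σ _ => hterm σ, Finset.sum_add_distrib]
  congr 1
  rw [← Finset.sum_filter]
  rw [sum_filter_perm_eq 0 (fun σ => c * ∏ k : Fin N, M (σ k.succ) k.succ)]
  rw [Finset.mul_sum]
  refine Finset.sum_congr rfl fun τ _ => ?_
  simp [Equiv.Perm.decomposeFin_symm_apply_succ, Equiv.swap_self, Matrix.submatrix_apply]

lemma a00_nonneg (A : Matrix (Fin (N + 1)) (Fin (N + 1)) ℝ) (hA : A.PosSemidef) :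
    0 ≤ A 0 0 := by
  obtain ⟨B, hrep⟩ := rep_of_posSemidef hA
  rw [hrep]
  exact Finset.sum_nonneg fun a _ => mul_self_nonneg _

/-- the main theorem, at index `0` -/
theorem main0 (A : Matrix (Fin (N + 1)) (Fin (N + 1)) ℝ) (hA : A.PosSemidef)
    (h : (Matrix.hadamard A A).permanent ≤ A.permanent ^ 2)
    (hi : (Matrix.hadamard (A.submatrix Fin.succ Fin.succ)
        (A.submatrix Fin.succ Fin.succ)).permanent
      ≤ (A.submatrix Fin.succ Fin.succ).permanent ^ 2)
    (α : ℝ) (hα : 0 ≤ α) :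
    (Matrix.hadamard (A + Matrix.single 0 0 α)
        (A + Matrix.single 0 0 α)).permanent
      ≤ (A + Matrix.single 0 0 α).permanent ^ 2 := by
  have e1 : (A + Matrix.single 0 0 α).permanent
      = A.permanent + α * (A.submatrix Fin.succ Fin.succ).permanent :=
    permanent_add_std A α
  have e2mat : Matrix.hadamard (A + Matrix.single 0 0 α)
        (A + Matrix.single 0 0 α)
      = Matrix.hadamard A A + Matrix.single 0 0 (2 * A 0 0 * α + α ^ 2) := by
    ext x y
    rcases eq_or_ne (0 : Fin (N+1)) x with hx | hx
    · rcases eq_or_ne (0 : Fin (N+1)) y with hy | hy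
      · subst hx; subst hy
        simp [Matrix.hadamard_apply, Matrix.single]
        ring
      · simp [Matrix.hadamard_apply, Matrix.single, hy]
    · simp [Matrix.hadamard_apply, Matrix.single, hx]
  have hsub : (Matrix.hadamard A A).submatrix Fin.succ Fin.succ
      = Matrix.hadamard (A.submatrix Fin.succ Fin.succ) (A.submatrix Fin.succ Fin.succ) := rfl
  have e2 : (Matrix.hadamard (A + Matrix.single 0 0 α)
        (A + Matrix.single 0 0 α)).permanent
      = (Matrix.hadamard A A).permanent
        + (2 * A 0 0 * α + α ^ 2) * (Matrix.hadamard (A.submatrix Fin.succ Fin.succ)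
            (A.submatrix Fin.succ Fin.succ)).permanent := by
    rw [e2mat, permanent_add_std, hsub]
  have hpsdAm : (A.submatrix Fin.succ Fin.succ).PosSemidef := hA.submatrix Fin.succ
  have hQ : 0 ≤ (A.submatrix Fin.succ Fin.succ).permanent := permanent_nonneg hpsdAm
  have hkey : A 0 0 * (A.submatrix Fin.succ Fin.succ).permanent ≤ A.permanent :=
    key_zero A hA
  have ha00 : 0 ≤ A 0 0 := a00_nonneg A hA
  rw [e2, e1]
  nlinarith [h, hi, hα, hQ, ha00, hkey, sq_nonneg α, mul_nonneg hα hQ,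
    mul_le_mul_of_nonneg_left hi ha00, mul_le_mul_of_nonneg_right hkey hQ,
    mul_nonneg ha00 hα, mul_nonneg (mul_nonneg hα hα) hQ,
    mul_le_mul_of_nonneg_left (mul_le_mul_of_nonneg_right hkey hQ) hα,
    mul_le_mul_of_nonneg_left (mul_le_mul_of_nonneg_left hi ha00) hα,
    mul_le_mul_of_nonneg_left hi (mul_nonneg hα hα)]

lemma permanent_submatrix_perm {K : Type*} [Fintype K] [DecidableEq K]
    (M : Matrix K K ℝ) (e : Perm K) :
    (M.submatrix ⇑e ⇑e).permanent = M.permanent := by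
  have h1 : M.submatrix ⇑e ⇑e = (M.submatrix ⇑e id).submatrix id ⇑e := by
    rw [Matrix.submatrix_submatrix]
    simp [Function.comp_id, Function.id_comp]
  rw [h1, Matrix.permanent_permute_rows, Matrix.permanent_permute_cols]

end fin

end PermPSD

open PermPSD in
/-- Diagonal closure: if a real PSD matrix `A` satisfies `per(A ∘ A) ≤ per(A)²` and
the same inequality holds for the principal submatrix `A(i)`, then for every `α ≥ 0`
the matrix `A' = A + α·E_{ii}` satisfies `per(A' ∘ A') ≤ per(A')²`. -/
theorem permanent_hadamard_le_sq_add_diag {n : ℕ}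
    (A : Matrix (Fin (n + 1)) (Fin (n + 1)) ℝ) (hA : A.PosSemidef) (i : Fin (n + 1))
    (h : (Matrix.hadamard A A).permanent ≤ A.permanent ^ 2)
    (hi : (Matrix.hadamard (A.submatrix i.succAbove i.succAbove)
        (A.submatrix i.succAbove i.succAbove)).permanent ≤
      (A.submatrix i.succAbove i.succAbove).permanent ^ 2)
    (α : ℝ) (hα : 0 ≤ α) :
    (Matrix.hadamard (A + Matrix.single i i α) (A + Matrix.single i i α)).permanent
      ≤ (A + Matrix.single i i α).permanent ^ 2 := by
  classical
  set π : Equiv.Perm (Fin (n + 1)) := (Fin.cycleRange i)⁻¹ with hπdef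
  have hπ0 : π 0 = i := by
    rw [hπdef, Equiv.Perm.inv_eq_iff_eq, Fin.cycleRange_self]
  have hπs : ⇑π ∘ Fin.succ = i.succAbove := by
    funext j
    show π j.succ = i.succAbove j
    rw [hπdef, Equiv.Perm.inv_eq_iff_eq, Fin.cycleRange_succAbove]
  set Ah : Matrix (Fin (n + 1)) (Fin (n + 1)) ℝ := A.submatrix ⇑π ⇑π with hAh
  have hAhpsd : Ah.PosSemidef := hA.submatrix ⇑π
  have hmin : Ah.submatrix Fin.succ Fin.succ = A.submatrix i.succAbove i.succAbove := by
    rw [hAh, Matrix.submatrix_submatrix, hπs]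
  have hhadAh : Matrix.hadamard Ah Ah = (Matrix.hadamard A A).submatrix ⇑π ⇑π := rfl
  have hh : (Matrix.hadamard Ah Ah).permanent ≤ Ah.permanent ^ 2 := by
    rw [hhadAh, permanent_submatrix_perm, hAh, permanent_submatrix_perm]
    exact h
  have hhi : (Matrix.hadamard (Ah.submatrix Fin.succ Fin.succ)
        (Ah.submatrix Fin.succ Fin.succ)).permanent
      ≤ (Ah.submatrix Fin.succ Fin.succ).permanent ^ 2 := by
    rw [hmin]; exact hi
  have hstd : (Matrix.single i i α).submatrix ⇑π ⇑π = Matrix.single 0 0 α := by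
    ext x y
    rw [← hπ0]
    simp [Matrix.single, Matrix.submatrix_apply, EmbeddingLike.apply_eq_iff_eq]
  have hBig : Ah + Matrix.single 0 0 α
      = (A + Matrix.single i i α).submatrix ⇑π ⇑π := by
    rw [Matrix.submatrix_add]
    simp only [Pi.add_apply]
    rw [hstd]
  have hm := main0 Ah hAhpsd hh hhi α hα
  rw [hBig] at hm
  have hhad2 : Matrix.hadamard ((A + Matrix.single i i α).submatrix ⇑π ⇑π)
      ((A + Matrix.single i i α).submatrix ⇑π ⇑π)
      = (Matrix.hadamard (A + Matrix.single i i α)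
          (A + Matrix.single i i α)).submatrix ⇑π ⇑π := rfl
  rw [hhad2, permanent_submatrix_perm, permanent_submatrix_perm] at hm
  exact hm
end

section
/- Let G' be obtained from a graph G by adding a new leaf vertex ℓ adjacent to a vertex v ∈ V(G). If per(L_G ∘ L_G) ≤ per(L_G)² and per(L_G(v) ∘ L_G(v)) ≤ per(L_G(v))², then per(L_{G'} ∘ L_{G'}) ≤ per(L_{G'})². -/
open Matrix

/-- The graph obtained from `G` by attaching a new leaf vertex adjacent to `v`. -/
def addLeaf {V : Type*} (G : SimpleGraph V) (v : V) : SimpleGraph (V ⊕ Unit) where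
  Adj x y :=
    match x, y with
    | Sum.inl a, Sum.inl b => G.Adj a b
    | Sum.inl a, Sum.inr _ => a = v
    | Sum.inr _, Sum.inl b => b = v
    | Sum.inr _, Sum.inr _ => False
  symm := by
    constructor
    rintro (a | a) (b | b) h
    · exact G.adj_symm h
    · exact h
    · exact h
    · exact h.elim
  loopless := by
    constructor
    rintro (a | a) h
    · exact G.irrefl h
    · exact h


section AuxPermanent
open Matrix Equiv Finset

section P1
variable {n m : Type*} [DecidableEq n] [Fintype n] [DecidableEq m] [Fintype m]
variable {R : Type*} [CommRing R]

theorem my_permanent_reindex (e : m ≃ n) (A : Matrix n n R) :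
    (A.submatrix e e).permanent = A.permanent := by
  rw [Matrix.permanent, Matrix.permanent]
  apply Fintype.sum_bijective (e.permCongr) e.permCongr.bijective
  intro σ
  apply Fintype.prod_equiv e
  intro i
  simp

theorem my_permanent_updateCol_add (M : Matrix n n R) (j : n) (u w : n → R) :
    (M.updateCol j (u + w)).permanent
      = (M.updateCol j u).permanent + (M.updateCol j w).permanent := by
  simp only [Matrix.permanent, ← Finset.sum_add_distrib]
  refine Finset.sum_congr rfl fun σ _ => ?_
  rw [← Finset.mul_prod_erase _ _ (mem_univ j), ← Finset.mul_prod_erase _ _ (mem_univ j),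
    ← Finset.mul_prod_erase _ _ (mem_univ j)]
  have h1 : ∀ i ∈ Finset.univ.erase j, ∀ (z : n → R),
      (M.updateCol j z) (σ i) i = M (σ i) i := by
    intro i hi z
    rw [Matrix.updateCol_ne (Finset.ne_of_mem_erase hi)]
  rw [Finset.prod_congr rfl (fun i hi => h1 i hi (u + w)),
    Finset.prod_congr rfl (fun i hi => h1 i hi u),
    Finset.prod_congr rfl (fun i hi => h1 i hi w)]
  simp only [Matrix.updateCol_self, Pi.add_apply]
  ring

/-- Sum over permutations fixing `v` equals `M v v` times permanent of the minor. -/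
theorem my_sum_fix (M : Matrix n n R) (v : n) :
    ∑ σ ∈ Finset.univ.filter (fun σ : Perm n => σ v = v), ∏ i, M (σ i) i
      = M v v * (M.submatrix (Subtype.val : {x : n // x ≠ v} → n) Subtype.val).permanent := by
  rw [Matrix.permanent, Finset.mul_sum]
  symm
  refine Finset.sum_bij' (i := fun (τ : Perm {x : n // x ≠ v}) _ => Equiv.Perm.ofSubtype τ)
    (j := fun σ hσ => σ.subtypePerm (p := fun x => x ≠ v) ?_) ?_ ?_ ?_ ?_ ?_
  · intro x
    have hσ' : σ v = v := by simpa using (Finset.mem_filter.mp hσ).2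
    constructor
    · intro hx hc
      exact hx (by rw [hc, hσ'])
    · intro hx hc
      exact hx (σ.injective (hc.trans hσ'.symm))
  · intro τ _
    simp only [Finset.mem_filter, Finset.mem_univ, true_and]
    exact Equiv.Perm.ofSubtype_apply_of_not_mem τ (by simp)
  · intro σ hσ
    exact Finset.mem_univ _
  · intro τ _
    ext x
    simp
  · intro σ hσ
    have hσ' : σ v = v := by simpa using (Finset.mem_filter.mp hσ).2
    ext x
    by_cases hx : x = v
    · rw [hx, Equiv.Perm.ofSubtype_subtypePerm_of_not_mem (p := fun y => y ≠ v) _ (by simp), hσ']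
    · rw [Equiv.Perm.ofSubtype_subtypePerm_of_mem (p := fun x => x ≠ v) _ hx]
  · intro τ _
    have h1 : Equiv.Perm.ofSubtype τ v = v :=
      Equiv.Perm.ofSubtype_apply_of_not_mem (p := fun x => x ≠ v) τ (by simp)
    rw [← Finset.mul_prod_erase _ (fun i => M ((Equiv.Perm.ofSubtype τ) i) i) (mem_univ v), h1]
    congr 1
    rw [Finset.prod_subtype (Finset.univ.erase v) (p := fun x : n => x ≠ v) (by simp)
      (f := fun i => M (Equiv.Perm.ofSubtype τ i) i)]
    refine Finset.prod_congr rfl fun x _ => ?_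
    rw [Equiv.Perm.ofSubtype_apply_of_mem (p := fun x => x ≠ v) τ x.2]
    rfl

/-- Column `v` concentrated on the diagonal: permanent factors. -/
theorem my_permanent_col_single (M : Matrix n n R) (v : n) (h : ∀ i, i ≠ v → M i v = 0) :
    M.permanent
      = M v v * (M.submatrix (Subtype.val : {x : n // x ≠ v} → n) Subtype.val).permanent := by
  rw [← my_sum_fix, Matrix.permanent, ← Finset.sum_filter_add_sum_filter_not Finset.univ
    (fun σ : Perm n => σ v = v)]
  have : ∑ σ ∈ Finset.univ.filter (fun σ : Perm n => ¬σ v = v), ∏ i, M (σ i) i = 0 := by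
    refine Finset.sum_eq_zero fun σ hσ => ?_
    refine Finset.prod_eq_zero (Finset.mem_univ v) (h _ ?_)
    simpa using (Finset.mem_filter.mp hσ).2
  rw [this, add_zero]

/-- Row `v` concentrated on the diagonal: permanent factors. -/
theorem my_permanent_row_single (M : Matrix n n R) (v : n) (h : ∀ j, j ≠ v → M v j = 0) :
    M.permanent
      = M v v * (M.submatrix (Subtype.val : {x : n // x ≠ v} → n) Subtype.val).permanent := by
  rw [← Matrix.permanent_transpose M, my_permanent_col_single Mᵀ v (fun i hi => h i hi)]
  rw [show (Mᵀ.submatrix (Subtype.val : {x : n // x ≠ v} → n) Subtype.val)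
    = (M.submatrix (Subtype.val : {x : n // x ≠ v} → n) Subtype.val)ᵀ from rfl,
    Matrix.permanent_transpose]
  rfl

theorem my_permanent_nonneg (M : Matrix n n ℝ) (h : ∀ i j, 0 ≤ M i j) : 0 ≤ M.permanent :=
  Finset.sum_nonneg fun σ _ => Finset.prod_nonneg fun i _ => h _ _

theorem my_permanent_ge (M : Matrix n n ℝ) (v : n) (h : ∀ i j, 0 ≤ M i j) :
    M v v * (M.submatrix (Subtype.val : {x : n // x ≠ v} → n) Subtype.val).permanent
      ≤ M.permanent := by
  rw [← my_sum_fix, Matrix.permanent]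
  refine Finset.sum_le_sum_of_subset_of_nonneg (Finset.filter_subset _ _) fun σ _ _ =>
    Finset.prod_nonneg fun i _ => h _ _

/-- `n! • per(Gram x)` is a sum of squares, so the permanent of a Gram matrix is nonnegative. -/
theorem my_permanent_gram_nonneg {k : Type*} [Fintype k] (x : n → k → ℝ) :
    0 ≤ (Matrix.of fun i j => ∑ t, x i t * x j t).permanent := by
  set A : Matrix n n ℝ := Matrix.of fun i j => ∑ t, x i t * x j t with hA
  have e1 : ∀ (f : n → k) (ρ : Perm n), (∏ i, x i (f (ρ i))) = ∏ j, x (ρ⁻¹ j) (f j) := by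
    intro f ρ
    rw [← Equiv.prod_comp ρ (fun j => x (ρ⁻¹ j) (f j))]
    simp
  have step1 : ∀ f : n → k, (∑ σ : Perm n, ∏ i, x i (f (σ i))) ^ 2
      = ∑ σ : Perm n, ∑ τ : Perm n, ∏ j, (x (σ⁻¹ j) (f j) * x (τ⁻¹ j) (f j)) := by
    intro f
    rw [sq, Finset.sum_mul_sum]
    refine Finset.sum_congr rfl fun σ _ => Finset.sum_congr rfl fun τ _ => ?_
    rw [e1 f σ, e1 f τ, ← Finset.prod_mul_distrib]
  have step2 : ∀ σ τ : Perm n,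
      ∑ f : n → k, ∏ j, (x (σ⁻¹ j) (f j) * x (τ⁻¹ j) (f j))
        = ∏ j, A (σ⁻¹ j) (τ⁻¹ j) := by
    intro σ τ
    rw [show (∏ j, A (σ⁻¹ j) (τ⁻¹ j)) = ∏ j, ∑ t, x (σ⁻¹ j) t * x (τ⁻¹ j) t from rfl]
    rw [Finset.prod_univ_sum]
    rw [Fintype.piFinset_univ]
  have step3 : ∀ σ : Perm n, (∑ τ : Perm n, ∏ j, A (σ⁻¹ j) (τ⁻¹ j)) = A.permanent := by
    intro σ
    have e2 : ∀ τ : Perm n, (∏ j, A (σ⁻¹ j) (τ⁻¹ j)) = ∏ i, A i ((τ⁻¹ * σ) i) := by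
      intro τ
      rw [← Equiv.prod_comp σ (fun j => A (σ⁻¹ j) (τ⁻¹ j))]
      simp [Equiv.Perm.mul_apply]
    rw [Finset.sum_congr rfl fun τ _ => e2 τ, ← Matrix.permanent_transpose, Matrix.permanent]
    have hbij : Function.Bijective (fun τ : Perm n => τ⁻¹ * σ) := by
      constructor
      · intro a b hab
        simpa using mul_right_cancel hab
      · intro ρ
        exact ⟨(ρ * σ⁻¹)⁻¹, by group⟩
    refine Fintype.sum_bijective _ hbij _ _ fun τ => ?_
    rfl
  have key : (Nat.factorial (Fintype.card n) : ℝ) * A.permanent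
      = ∑ f : n → k, (∑ σ : Perm n, ∏ i, x i (f (σ i))) ^ 2 := by
    rw [Finset.sum_congr rfl (fun f _ => step1 f), Finset.sum_comm]
    have inner : ∀ σ : Perm n,
        (∑ f : n → k, ∑ τ : Perm n, ∏ j, (x (σ⁻¹ j) (f j) * x (τ⁻¹ j) (f j)))
          = A.permanent := by
      intro σ
      rw [Finset.sum_comm, Finset.sum_congr rfl (fun τ (_ : τ ∈ Finset.univ) => step2 σ τ)]
      exact step3 σ
    rw [Finset.sum_congr rfl (fun σ (_ : σ ∈ Finset.univ) => inner σ)]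
    rw [Finset.sum_const, Finset.card_univ, Fintype.card_perm, nsmul_eq_mul]
  have h2 : 0 ≤ (Nat.factorial (Fintype.card n) : ℝ) * A.permanent := by
    rw [key]
    exact Finset.sum_nonneg fun f _ => sq_nonneg _
  have hc : (0:ℝ) < (Nat.factorial (Fintype.card n) : ℝ) :=
    Nat.cast_pos.mpr (Nat.factorial_pos _)
  nlinarith [h2, hc]


end P1

section P2
variable {V : Type*} [Fintype V] [DecidableEq V]

def sumUnitEquiv (V : Type*) : V ≃ {x : V ⊕ Unit // x ≠ Sum.inr ()} where
  toFun a := ⟨Sum.inl a, by simp⟩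
  invFun x := match x with
    | ⟨Sum.inl a, _⟩ => a
    | ⟨Sum.inr (), h⟩ => (h rfl).elim
  left_inv a := rfl
  right_inv x := by
    rcases x with ⟨a | ⟨⟩, h⟩
    · rfl
    · exact (h rfl).elim

theorem permanent_add_single (N : Matrix V V ℝ) (v : V) (α : ℝ) :
    (Matrix.of fun a b => N a b + if a = v ∧ b = v then α else 0).permanent
      = N.permanent + α * (del N v).permanent := by
  have hP : (Matrix.of fun a b => N a b + if a = v ∧ b = v then α else 0)
      = N.updateCol v ((fun i => N i v) + α • (Pi.single v 1 : V → ℝ)) := by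
    ext a b
    by_cases hb : b = v
    · subst hb
      simp [Matrix.updateCol_apply, Pi.single_apply]
    · simp [Matrix.updateCol_apply, hb]
  rw [hP, my_permanent_updateCol_add, Matrix.permanent_updateCol_smul,
    Matrix.updateCol_eq_self]
  congr 2
  rw [my_permanent_col_single _ v (fun i hi => by simp [Matrix.updateCol_apply, hi,
    Pi.single_apply])]
  rw [Matrix.updateCol_self]
  simp only [Pi.single_eq_same, one_mul]
  congr 1
  ext a b
  simp [del, Matrix.updateCol_apply, b.2]

theorem permanent_ext (N : Matrix V V ℝ) (v : V) (α β γ δ : ℝ)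
    (M' : Matrix (V ⊕ Unit) (V ⊕ Unit) ℝ)
    (h1 : ∀ a b, M' (Sum.inl a) (Sum.inl b) = N a b + if a = v ∧ b = v then α else 0)
    (h2 : ∀ a u, M' (Sum.inl a) (Sum.inr u) = if a = v then β else 0)
    (h3 : ∀ b u, M' (Sum.inr u) (Sum.inl b) = if b = v then γ else 0)
    (h4 : ∀ u u', M' (Sum.inr u) (Sum.inr u') = δ) :
    M'.permanent = δ * (N.permanent + α * (del N v).permanent)
      + β * (γ * (del N v).permanent) := by
  set u₀ : V ⊕ Unit := Sum.inr () with hu₀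
  have hM : M' = M'.updateCol u₀ (δ • (Pi.single u₀ 1 : V ⊕ Unit → ℝ) + β • (Pi.single (Sum.inl v) 1 : V ⊕ Unit → ℝ)) := by
    ext i j
    rcases j with b | ⟨⟩
    · rw [Matrix.updateCol_ne (by simp [hu₀])]
    · rw [Matrix.updateCol_self]
      rcases i with a | ⟨⟩
      · simp [h2, Pi.single_apply, hu₀]
      · simp [h4, Pi.single_apply, hu₀]
  rw [hM, my_permanent_updateCol_add, Matrix.permanent_updateCol_smul,
    Matrix.permanent_updateCol_smul]
  congr 1
  · -- δ-term
    congr 1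
    rw [my_permanent_col_single _ u₀ (fun i hi => by
      rw [Matrix.updateCol_self]; simp [Pi.single_apply, hi])]
    rw [Matrix.updateCol_self]
    simp only [Pi.single_eq_same, one_mul]
    calc ((M'.updateCol u₀ (Pi.single u₀ 1 : V ⊕ Unit → ℝ)).submatrix
            (Subtype.val : {x : V ⊕ Unit // x ≠ u₀} → V ⊕ Unit) Subtype.val).permanent
        = (((M'.updateCol u₀ (Pi.single u₀ 1 : V ⊕ Unit → ℝ)).submatrix
            (Subtype.val : {x : V ⊕ Unit // x ≠ u₀} → V ⊕ Unit) Subtype.val).submatrix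
            (sumUnitEquiv V) (sumUnitEquiv V)).permanent :=
          (my_permanent_reindex (sumUnitEquiv V) _).symm
      _ = (Matrix.of fun a b => N a b + if a = v ∧ b = v then α else 0).permanent := by
          congr 1
          ext a b
          simp only [Matrix.submatrix_apply]
          rw [show (Subtype.val (sumUnitEquiv V a)) = Sum.inl a from rfl,
            show (Subtype.val (sumUnitEquiv V b)) = Sum.inl b from rfl,
            Matrix.updateCol_ne (by simp [hu₀]), h1]
          rfl
      _ = N.permanent + α * (del N v).permanent := permanent_add_single N v α
  · -- β-term
    congr 1
    rw [← Matrix.permanent_permute_cols (Equiv.swap (Sum.inl v) u₀)]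
    rw [my_permanent_col_single _ u₀ (fun i hi => by
      simp only [Matrix.submatrix_apply, id_eq]
      rw [Matrix.updateCol_self]
      rw [Pi.single_apply, if_neg]
      intro hc
      rw [Equiv.swap_apply_eq_iff] at hc
      simp only [hc, Equiv.swap_apply_left] at hi
      exact hi rfl)]
    simp only [Matrix.submatrix_apply, id_eq, Equiv.swap_apply_right, Matrix.updateCol_self,
      Pi.single_eq_same, one_mul]
    calc (((M'.updateCol u₀ (Pi.single (Sum.inl v) 1 : V ⊕ Unit → ℝ)).submatrix
            (Equiv.swap (Sum.inl v) u₀) id).submatrix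
            (Subtype.val : {x : V ⊕ Unit // x ≠ u₀} → V ⊕ Unit) Subtype.val).permanent
        = ((((M'.updateCol u₀ (Pi.single (Sum.inl v) 1 : V ⊕ Unit → ℝ)).submatrix
            (Equiv.swap (Sum.inl v) u₀) id).submatrix
            (Subtype.val : {x : V ⊕ Unit // x ≠ u₀} → V ⊕ Unit) Subtype.val).submatrix
            (sumUnitEquiv V) (sumUnitEquiv V)).permanent :=
          (my_permanent_reindex (sumUnitEquiv V) _).symm
      _ = (N.updateRow v (γ • (Pi.single v 1 : V → ℝ))).permanent := by
          congr 1
          ext a b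
          simp only [Matrix.submatrix_apply, id_eq]
          rw [show (Subtype.val (sumUnitEquiv V a)) = Sum.inl a from rfl,
            show (Subtype.val (sumUnitEquiv V b)) = Sum.inl b from rfl]
          by_cases ha : a = v
          · subst ha
            rw [Equiv.swap_apply_left, Matrix.updateCol_ne (by simp [hu₀]), h3,
              Matrix.updateRow_self]
            simp [Pi.single_apply]
          · rw [Equiv.swap_apply_of_ne_of_ne (by simp [ha]) (by simp [hu₀]),
              Matrix.updateCol_ne (by simp [hu₀]), h1,
              Matrix.updateRow_ne ha]
            simp [ha]
      _ = γ * (del N v).permanent := by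
          rw [Matrix.permanent_updateRow_smul]
          congr 1
          rw [my_permanent_row_single _ v (fun j hj => by
            rw [Matrix.updateRow_self, Pi.single_apply, if_neg hj])]
          rw [Matrix.updateRow_self]
          simp only [Pi.single_eq_same, one_mul]
          congr 1
          ext a b
          simp [del, Matrix.updateRow_ne a.2]


end P2

section P3
open scoped Classical

variable {V : Type*} [Fintype V] [DecidableEq V] (G : SimpleGraph V) (v : V)

set_option linter.unusedSectionVars false

theorem lap_apply_s9 (u w : V) :
    lap G u w = (if u = w then ∑ t : V, (if G.Adj u t then (1:ℝ) else 0) else 0)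
      - (if G.Adj u w then 1 else 0) := by
  unfold lap
  rw [SimpleGraph.lapMatrix, Matrix.sub_apply, SimpleGraph.degMatrix, Matrix.diagonal_apply,
    SimpleGraph.degree_eq_sum_if_adj (R := ℝ)]
  congr 1

theorem addLeaf_adj_inl_inl (a b : V) :
    (addLeaf G v).Adj (Sum.inl a) (Sum.inl b) ↔ G.Adj a b := Iff.rfl
theorem addLeaf_adj_inl_inr (a : V) (u : Unit) :
    (addLeaf G v).Adj (Sum.inl a) (Sum.inr u) ↔ a = v := Iff.rfl
theorem addLeaf_adj_inr_inl (b : V) (u : Unit) :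
    (addLeaf G v).Adj (Sum.inr u) (Sum.inl b) ↔ b = v := Iff.rfl
theorem addLeaf_adj_inr_inr (u u' : Unit) :
    ¬ (addLeaf G v).Adj (Sum.inr u) (Sum.inr u') := fun h => h

theorem lapAdd_inl_inl (a b : V) :
    lap (addLeaf G v) (Sum.inl a) (Sum.inl b)
      = lap G a b + (if a = v ∧ b = v then 1 else 0) := by
  rw [lap_apply_s9, lap_apply_s9]
  have hs : (∑ t : V ⊕ Unit, if (addLeaf G v).Adj (Sum.inl a) t then (1:ℝ) else 0)
      = (∑ t : V, if G.Adj a t then (1:ℝ) else 0) + (if a = v then 1 else 0) := by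
    rw [Fintype.sum_sum_type]
    congr 1
    simp only [addLeaf_adj_inl_inr]
    simp
  rw [hs]
  by_cases hab : a = b
  · subst hab
    simp only [if_pos rfl, addLeaf_adj_inl_inl]
    by_cases hav : a = v <;> simp [hav] <;> ring
  · have : (Sum.inl a : V ⊕ Unit) ≠ Sum.inl b := by simp [hab]
    rw [if_neg this, if_neg hab,
      if_neg (show ¬(a = v ∧ b = v) by rintro ⟨rfl, rfl⟩; exact hab rfl)]
    simp only [addLeaf_adj_inl_inl]
    ring

theorem lapAdd_inl_inr (a : V) (u : Unit) :
    lap (addLeaf G v) (Sum.inl a) (Sum.inr u)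
      = if a = v then (-1 : ℝ) else 0 := by
  rw [lap_apply_s9]
  rw [if_neg (by simp)]
  simp only [addLeaf_adj_inl_inr]
  by_cases hav : a = v <;> simp [hav]

theorem lapAdd_inr_inl (b : V) (u : Unit) :
    lap (addLeaf G v) (Sum.inr u) (Sum.inl b)
      = if b = v then (-1 : ℝ) else 0 := by
  rw [lap_apply_s9]
  rw [if_neg (by simp)]
  simp only [addLeaf_adj_inr_inl]
  by_cases hbv : b = v <;> simp [hbv]

theorem lapAdd_inr_inr (u u' : Unit) :
    lap (addLeaf G v) (Sum.inr u) (Sum.inr u') = 1 := by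
  rw [lap_apply_s9]
  have hu : (Sum.inr u : V ⊕ Unit) = Sum.inr u' := by rfl
  rw [if_pos hu, if_neg (addLeaf_adj_inr_inr G v u u')]
  rw [Fintype.sum_sum_type]
  simp only [addLeaf_adj_inr_inl, addLeaf_adj_inr_inr]
  simp [Finset.sum_ite_eq']

/-- Incidence-style vectors whose Gram matrix is twice the Laplacian. -/
noncomputable def gvec (u : V) (p : V × V) : ℝ :=
  (if G.Adj p.1 p.2 then 1 else 0)
    * ((if p.1 = u then 1 else 0) - (if p.2 = u then 1 else 0))

theorem gram_eq_two_lap :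
    (Matrix.of fun u w => ∑ p : V × V, gvec G u p * gvec G w p) = (2:ℝ) • lap G := by
  ext u w
  rw [Matrix.smul_apply, Matrix.of_apply, lap_apply_s9, Fintype.sum_prod_type]
  have expand : ∀ a b : V, gvec G u (a, b) * gvec G w (a, b)
      = ((if a = u then (1:ℝ) else 0) * ((if a = w then (1:ℝ) else 0)
          * (if G.Adj a b then (1:ℝ) else 0))
        + (if b = u then (1:ℝ) else 0) * ((if b = w then (1:ℝ) else 0)
          * (if G.Adj a b then (1:ℝ) else 0)))
        - ((if a = u then (1:ℝ) else 0) * ((if b = w then (1:ℝ) else 0)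
          * (if G.Adj a b then (1:ℝ) else 0))
        + (if b = u then (1:ℝ) else 0) * ((if a = w then (1:ℝ) else 0)
          * (if G.Adj a b then (1:ℝ) else 0))) := by
    intro a b
    unfold gvec
    by_cases h : G.Adj a b <;> simp only [h, if_true, if_false] <;> ring
  simp only [expand]
  rw [Finset.sum_congr rfl (fun a (_ : a ∈ Finset.univ) => Finset.sum_sub_distrib
    (s := Finset.univ) _ _)]
  rw [Finset.sum_sub_distrib]
  simp only [Finset.sum_add_distrib]
  -- now four double sums
  simp only [← Finset.mul_sum, Finset.sum_ite_eq', Finset.mem_univ, if_true]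
  have hsymm : ∀ y : V, ∑ x : V, (if G.Adj x y then (1:ℝ) else 0)
      = ∑ x : V, (if G.Adj y x then (1:ℝ) else 0) :=
    fun y => Finset.sum_congr rfl fun x _ => by rw [SimpleGraph.adj_comm]
  by_cases huw : u = w
  · subst huw
    simp only [boole_mul, Finset.sum_ite_eq', Finset.mem_univ, if_true, if_pos rfl,
      SimpleGraph.irrefl, if_false, smul_eq_mul]
    rw [hsymm u]
    simp
    ring
  · simp only [boole_mul, Finset.sum_ite_eq', Finset.mem_univ, if_true, if_neg huw,
      smul_eq_mul]
    rw [show (if G.Adj w u then (1:ℝ) else 0) = (if G.Adj u w then (1:ℝ) else 0) by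
      rw [SimpleGraph.adj_comm]]
    simp
    by_cases h : G.Adj u w <;> simp [h] <;> norm_num

end P3

end AuxPermanent

open Matrix Equiv Finset in
open scoped Classical in
/-- Attaching a leaf preserves Chollet's Laplacian inequality. -/
theorem addLeaf_permanent_hadamard_le_sq {V : Type*} [Fintype V] [DecidableEq V]
    (G : SimpleGraph V) (v : V)
    (h : (Matrix.hadamard (lap G) (lap G)).permanent ≤ (lap G).permanent ^ 2)
    (hv : (Matrix.hadamard (del (lap G) v) (del (lap G) v)).permanent ≤
      (del (lap G) v).permanent ^ 2) :
    (Matrix.hadamard (lap (addLeaf G v)) (lap (addLeaf G v))).permanent ≤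
      (lap (addLeaf G v)).permanent ^ 2 := by
  classical
  set L := lap G with hL
  set M := del (lap G) v with hM
  set d := lap G v v with hd0
  -- extension identities
  have e1 := permanent_ext L v 1 (-1) (-1) 1 (lap (addLeaf G v))
    (fun a b => lapAdd_inl_inl G v a b)
    (fun a u => lapAdd_inl_inr G v a u)
    (fun b u => lapAdd_inr_inl G v b u)
    (fun u u' => lapAdd_inr_inr G v u u')
  have hdelh : Matrix.hadamard M M = del (Matrix.hadamard L L) v := rfl
  have e2 := permanent_ext (Matrix.hadamard L L) v (2*d+1) 1 1 1
    (Matrix.hadamard (lap (addLeaf G v)) (lap (addLeaf G v)))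
    (fun a b => by
      rw [Matrix.hadamard_apply, Matrix.hadamard_apply, lapAdd_inl_inl G v a b]
      by_cases hab : a = v ∧ b = v
      · rw [if_pos hab, if_pos hab]
        obtain ⟨rfl, rfl⟩ := hab
        ring
      · rw [if_neg hab, if_neg hab]
        ring)
    (fun a u => by
      rw [Matrix.hadamard_apply, lapAdd_inl_inr G v a u]
      by_cases hav : a = v <;> simp [hav])
    (fun b u => by
      rw [Matrix.hadamard_apply, lapAdd_inr_inl G v b u]
      by_cases hbv : b = v <;> simp [hbv])
    (fun u u' => by rw [Matrix.hadamard_apply, lapAdd_inr_inr G v u u']; norm_num)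
  -- nonnegativity facts
  have hd : 0 ≤ d := by
    have : lap G v v = ∑ t : V, if G.Adj v t then (1:ℝ) else 0 := by
      rw [lap_apply_s9]
      simp
    rw [hd0, this]
    exact Finset.sum_nonneg fun t _ => by positivity
  have ha : 0 ≤ L.permanent := by
    have hg := my_permanent_gram_nonneg (gvec G)
    rw [gram_eq_two_lap G, Matrix.permanent_smul] at hg
    have h2 : (0:ℝ) < 2 ^ Fintype.card V := by positivity
    nlinarith [hg, h2]
  have hb : 0 ≤ M.permanent := by
    have hgram : (Matrix.of fun (i j : {x : V // x ≠ v}) =>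
        ∑ p : V × V, gvec G i.val p * gvec G j.val p) = (2:ℝ) • M := by
      ext i j
      have h2 := congrFun (congrFun (congrArg (fun (A : Matrix V V ℝ) (a b : V) => A a b)
        (gram_eq_two_lap G)) i.val) j.val
      simpa [hM, hL, del] using h2
    have hg := my_permanent_gram_nonneg (fun (a : {x : V // x ≠ v}) p => gvec G a.val p)
    rw [hgram, Matrix.permanent_smul] at hg
    have h2 : (0:ℝ) < 2 ^ Fintype.card {x : V // x ≠ v} := by positivity
    nlinarith [hg, h2]
  have hq : 0 ≤ (Matrix.hadamard M M).permanent :=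
    my_permanent_nonneg _ (fun i j => by rw [Matrix.hadamard_apply]; exact mul_self_nonneg _)
  have hp : d * d * (Matrix.hadamard M M).permanent ≤ (Matrix.hadamard L L).permanent := by
    have := my_permanent_ge (Matrix.hadamard L L) v
      (fun i j => by rw [Matrix.hadamard_apply]; exact mul_self_nonneg _)
    rw [Matrix.hadamard_apply] at this
    rw [hdelh]
    exact this
  -- assemble
  rw [← hdelh] at e2
  rw [e1, e2]
  set a := L.permanent
  set b := M.permanent
  set p := (Matrix.hadamard L L).permanent
  set q := (Matrix.hadamard M M).permanent
  have key : d * q ≤ a * b := by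
    have hA : d * d * q ≤ a ^ 2 := le_trans hp h
    have hB : q ≤ b ^ 2 := hv
    have h1 : (d * q) * (d * q) ≤ (a * b) * (a * b) := by nlinarith [mul_nonneg hd hq]
    nlinarith [mul_nonneg ha hb, mul_nonneg hd hq, h1]
  nlinarith [h, hv, key, mul_nonneg ha hb, hq, hd, hb]
end

section
/- For n ≥ 3, let U_n = Σ_t m_{n,t}·2^{n−2t} and V_n = Σ_t m_{n,t}·4^{n−2t}, where m_{n,t} is the number of size-t matchings in the cycle C_n. Then U_n² − V_n ≥ 4·U_n. -/
/-!
Write `a_t = m_{n,t} 2^{n-2t}`, so that `U_n = Σ a_t` and, since `m ≤ m²`, `V_n ≤ Σ a_t²`.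
Dropping the cross terms not involving `a_0 = 2^n` gives `U_n² - V_n ≥ 2^{n+1} (U_n - 2^n)`,
and the `n` single-edge matchings give `U_n - 2^n ≥ n 2^{n-2}`; for `n ≥ 3` this is enough.
-/

/-- A finite set of edges forms a matching if its edges are pairwise disjoint. -/
def IsMatchingSet {n : ℕ} (M : Finset (Sym2 (Fin n))) : Prop :=
  ∀ e ∈ M, ∀ f ∈ M, e ≠ f → ∀ x : Fin n, ¬(x ∈ e ∧ x ∈ f)

/-- The number of matchings of size `t` in the cycle graph `C_n`. -/
noncomputable def matchingCount (n t : ℕ) : ℕ :=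
  letI : DecidablePred fun M : Finset (Sym2 (Fin n)) => IsMatchingSet M :=
    fun _ => Classical.dec _
  (((SimpleGraph.cycleGraph n).edgeFinset.powersetCard t).filter
    (fun M => IsMatchingSet M)).card

/-- `U_n = Σ_t m_{n,t} 2^{n-2t}`. -/
noncomputable def U (n : ℕ) : ℤ :=
  ∑ t ∈ Finset.range (n / 2 + 1), (matchingCount n t : ℤ) * 2 ^ (n - 2 * t)

/-- `V_n = Σ_t m_{n,t} 4^{n-2t}`. -/
noncomputable def V (n : ℕ) : ℤ :=
  ∑ t ∈ Finset.range (n / 2 + 1), (matchingCount n t : ℤ) * 4 ^ (n - 2 * t)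

open Finset SimpleGraph

theorem Finset.two_mul_mul_sum_sub_le_sq_sum_sub_sum_sq {ι R : Type*}
    [CommRing R] [LinearOrder R] [IsStrictOrderedRing R] {s : Finset ι} {a : ι → R}
    (ha : ∀ t ∈ s, 0 ≤ a t) {i : ι} (hi : i ∈ s) :
    2 * a i * (∑ t ∈ s, a t - a i) ≤ (∑ t ∈ s, a t) ^ 2 - ∑ t ∈ s, a t ^ 2 := by
  classical
  have hsq : ∑ t ∈ s.erase i, a t ^ 2 ≤ (∑ t ∈ s.erase i, a t) ^ 2 :=
    sum_sq_le_sq_sum_of_nonneg fun t ht => ha t (mem_of_mem_erase ht)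
  rw [← add_sum_erase s a hi, ← add_sum_erase s (a · ^ 2) hi]
  linarith

theorem isMatchingSet_singleton {n : ℕ} (e : Sym2 (Fin n)) : IsMatchingSet {e} := by
  intro e he f hf hef
  simp only [mem_singleton] at he hf
  exact absurd (he.trans hf.symm) hef

theorem matchingCount_zero (n : ℕ) : matchingCount n 0 = 1 := by
  classical
  rw [matchingCount, powersetCard_zero, filter_singleton, if_pos (by simp [IsMatchingSet])]
  rfl

theorem matchingCount_one (n : ℕ) : matchingCount n 1 = #(cycleGraph n).edgeFinset := by
  classical
  rw [matchingCount, filter_true_of_mem fun M hM => ?_, card_powersetCard, Nat.choose_one_right]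
  obtain ⟨e, rfl⟩ := card_eq_one.mp (mem_powersetCard.mp hM).2
  exact isMatchingSet_singleton e

theorem card_edgeFinset_cycleGraph {n : ℕ} (hn : 3 ≤ n) : #(cycleGraph n).edgeFinset = n := by
  obtain ⟨k, rfl⟩ := Nat.exists_eq_add_of_le' hn
  have := (cycleGraph (k + 3)).sum_degrees_eq_twice_card_edges
  simp only [cycleGraph_degree_three_le, sum_const, card_univ, Fintype.card_fin,
    smul_eq_mul] at this
  omega

theorem V_le_sum_sq (n : ℕ) :
    V n ≤ ∑ t ∈ range (n / 2 + 1), ((matchingCount n t : ℤ) * 2 ^ (n - 2 * t)) ^ 2 := by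
  refine sum_le_sum fun t _ => ?_
  rw [show (4 : ℤ) = 2 ^ 2 by norm_num, ← pow_mul, mul_comm 2, pow_mul, mul_pow]
  gcongr
  exact_mod_cast Nat.le_self_pow two_ne_zero _

theorem two_mul_two_pow_mul_le_U_sq_sub_V (n : ℕ) :
    2 * 2 ^ n * (U n - 2 ^ n) ≤ U n ^ 2 - V n := by
  have hterm : (matchingCount n 0 : ℤ) * 2 ^ (n - 2 * 0) = 2 ^ n := by simp [matchingCount_zero]
  have h := two_mul_mul_sum_sub_le_sq_sum_sub_sum_sq
    (a := fun t => (matchingCount n t : ℤ) * 2 ^ (n - 2 * t)) (fun t _ => by positivity)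
    (show 0 ∈ range (n / 2 + 1) by simp)
  rw [hterm] at h
  exact h.trans (sub_le_sub_left (V_le_sum_sq n) _)

theorem two_pow_add_mul_le_U {n : ℕ} (hn : 3 ≤ n) : 2 ^ n + n * 2 ^ (n - 2) ≤ U n := by
  have hsub : {0, 1} ⊆ range (n / 2 + 1) := by
    intro t ht
    simp only [mem_insert, mem_singleton] at ht
    simp only [mem_range]
    omega
  have h := sum_le_sum_of_subset_of_nonneg hsub
    (f := fun t => (matchingCount n t : ℤ) * 2 ^ (n - 2 * t)) (fun t _ _ => by positivity)
  rw [sum_pair zero_ne_one, matchingCount_zero, matchingCount_one,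
    card_edgeFinset_cycleGraph hn] at h
  simpa [U] using h

/-- For `n ≥ 3`, `U_n² − V_n ≥ 4 U_n`. -/
theorem U_sq_sub_V_ge (n : ℕ) (hn : 3 ≤ n) : U n ^ 2 - V n ≥ 4 * U n := by
  have hsq := two_mul_two_pow_mul_le_U_sq_sub_V n
  have hU := two_pow_add_mul_le_U hn
  have h4Q : (2 : ℤ) ^ n = 4 * 2 ^ (n - 2) := by
    rw [← pow_sub_mul_pow 2 (show 2 ≤ n by omega)]; ring
  have hQ : (2 : ℤ) ≤ 2 ^ (n - 2) := le_self_pow₀ one_le_two (by omega)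
  have h3 : (3 : ℤ) ≤ n := by exact_mod_cast hn
  rw [h4Q] at hsq hU
  -- with `Q = 2^{n-2}` the goal follows from `(8Q - 4) U ≥ (8Q - 4) 7Q ≥ 32Q²`
  nlinarith [mul_nonneg (show (0 : ℤ) ≤ 8 * 2 ^ (n - 2) - 4 by linarith)
    (show (0 : ℤ) ≤ U n - 7 * 2 ^ (n - 2) by nlinarith)]
end
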